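/- arXiv:2404.13485 — 13 statements merged into one kernel-verified Lean document; each statement's English description precedes it below -/
import Mathlib

section
/- Let f : ℝ → ℝ be continuous with f(y) → +∞ as y → +∞ and f(y) → −∞ as y → −∞, and F(y) = ∫₀^y f(z) dz. Let ξ ∈ ℝ with ξ ≠ 0, and suppose η, u, v : ℝ → ℂ are differentiable, square-integrable, and satisfy the fibered shallow-water system with profile f, wavenumber ξ and frequency E = ξ. Then v ≡ 0 and there exists c ∈ ℂ such that η(y) = u(y) = c·e^{−F(y)} for all y ∈ ℝ. In particular the solution space at E = ξ is one-dimensional, so no other spectral branch can cross the Kelvin branch E(ξ) = ξ. -/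
open MeasureTheory Filter

/-- The eigenvalue equation `Ĥ(ξ)ψ = Eψ` for the fibered shallow-water
Hamiltonian `Ĥ(ξ) = [[0, ξ, D_y],[ξ, 0, i f],[D_y, -i f, 0]]`, written
componentwise for `ψ = (η, u, v)` with `D_y = -i d/dy`. -/
def FiberedShallowWater (f : ℝ → ℝ) (ξ E : ℝ) (η u v : ℝ → ℂ) : Prop :=
  ∀ y : ℝ,
    (ξ : ℂ) * u y - Complex.I * deriv v y = (E : ℂ) * η y ∧
    (ξ : ℂ) * η y + Complex.I * (f y : ℂ) * v y = (E : ℂ) * u y ∧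
    -Complex.I * deriv η y - Complex.I * (f y : ℂ) * u y = (E : ℂ) * v y

/-- Solve the linear ODE `w' = g w` explicitly. -/
lemma ode_solve_aux (g : ℝ → ℝ) (hg : Continuous g) (w : ℝ → ℂ) (hw : Differentiable ℝ w)
    (hode : ∀ y, deriv w y = (g y : ℂ) * w y) (y : ℝ) :
    w y = w 0 * (Real.exp (∫ z in (0:ℝ)..y, g z) : ℂ) := by
  set F : ℝ → ℝ := fun t => ∫ z in (0:ℝ)..t, g z with hFdef
  have hFd : ∀ t, HasDerivAt F (g t) t := fun t =>
    (hg.integral_hasStrictDerivAt 0 t).hasDerivAt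
  set G : ℝ → ℂ := fun t => w t * Complex.exp (-(F t : ℂ)) with hGdef
  have hGd : ∀ t, HasDerivAt G 0 t := by
    intro t
    have h1 : HasDerivAt (fun s : ℝ => Complex.exp (-(F s : ℂ)))
        (Complex.exp (-(F t : ℂ)) * (-(g t) : ℂ)) t := ((hFd t).ofReal_comp.neg).cexp
    have h2 := ((hw t).hasDerivAt).mul h1
    rw [hode t] at h2
    exact h2.congr_deriv (by ring)
  have hconst := is_const_of_deriv_eq_zero (f := G)
    (fun s => (hGd s).differentiableAt) (fun s => (hGd s).deriv) y 0
  have h0 : F 0 = 0 := by simp [hFdef]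
  have hy : w y * Complex.exp (-(F y : ℂ)) = w 0 := by
    have := hconst
    simp only [hGdef, h0] at this
    simpa using this
  have : w y = w 0 * Complex.exp ((F y : ℂ)) := by
    calc w y = w y * (Complex.exp (-(F y : ℂ)) * Complex.exp ((F y : ℂ))) := by
          rw [← Complex.exp_add]; simp
      _ = (w y * Complex.exp (-(F y : ℂ))) * Complex.exp ((F y : ℂ)) := by ring
      _ = w 0 * Complex.exp ((F y : ℂ)) := by rw [hy]
  rw [this, Complex.ofReal_exp]

/-- A function bounded below in norm by a positive constant on `Set.Ici b`
is not in `L²`. -/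
lemma not_memL2_aux (w : ℝ → ℂ) (c : ℂ) (hc : c ≠ 0) (b : ℝ)
    (hle : ∀ x, x ∈ Set.Ici b → ‖c‖ ≤ ‖w x‖) : ¬ MemLp w 2 volume := by
  intro hw
  have hmono : eLpNorm ((Set.Ici b).indicator fun _ => c) 2 volume ≤ eLpNorm w 2 volume := by
    apply eLpNorm_mono
    intro x
    by_cases hx : x ∈ Set.Ici b
    · rw [Set.indicator_of_mem hx]; exact hle x hx
    · rw [Set.indicator_of_notMem hx]; simp
  have hval : eLpNorm ((Set.Ici b).indicator fun _ => c) 2 volume = ⊤ := by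
    rw [eLpNorm_indicator_const₀ (measurableSet_Ici.nullMeasurableSet)
      (by norm_num) (by norm_num), Real.volume_Ici]
    rw [ENNReal.top_rpow_of_pos (by norm_num)]
    rw [ENNReal.mul_top]
    simp [hc]
  rw [hval] at hmono
  exact hw.2.ne (le_antisymm le_top hmono)

/-- **Uniqueness of the Kelvin mode at `E = ξ`.** If `f` is continuous with
`f(y) → ±∞` as `y → ±∞` and `(η,u,v)` is a differentiable, square-integrable
solution of the fibered shallow-water system with frequency `E = ξ ≠ 0`,
then `v ≡ 0` and `η = u = c e^{-F}` with `F(y) = ∫₀^y f`. -/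
theorem kelvin_branch_unique
    (f : ℝ → ℝ) (hf : Continuous f)
    (hftop : Tendsto f atTop atTop) (hfbot : Tendsto f atBot atBot)
    (ξ : ℝ) (hξ : ξ ≠ 0)
    (η u v : ℝ → ℂ)
    (hηd : Differentiable ℝ η) (hud : Differentiable ℝ u) (hvd : Differentiable ℝ v)
    (hη2 : MemLp η 2 volume) (hu2 : MemLp u 2 volume) (hv2 : MemLp v 2 volume)
    (hsys : FiberedShallowWater f ξ ξ η u v) :
    (∀ y : ℝ, v y = 0) ∧
    ∃ c : ℂ, ∀ y : ℝ,
      η y = c * (Real.exp (-(∫ z in (0:ℝ)..y, f z)) : ℂ) ∧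
      u y = c * (Real.exp (-(∫ z in (0:ℝ)..y, f z)) : ℂ) := by
  set F : ℝ → ℝ := fun t => ∫ z in (0:ℝ)..t, f z with hFdef
  -- ODE for v : v' = f v
  have hvode : ∀ y, deriv v y = (f y : ℂ) * v y := by
    intro y
    obtain ⟨e1, e2, e3⟩ := hsys y
    apply mul_left_cancel₀ Complex.I_ne_zero
    linear_combination -e1 - e2
  have hvform : ∀ y, v y = v 0 * (Real.exp (F y) : ℂ) :=
    ode_solve_aux f hf v hvd hvode
  -- F is eventually nonnegative
  obtain ⟨a, ha⟩ := (hftop.eventually_ge_atTop 1).exists_forall_of_atTop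
  have hFgrow : ∀ y, a ≤ y → F a + (y - a) ≤ F y := by
    intro y hay
    have hint : F y = F a + ∫ z in a..y, f z := by
      have h := intervalIntegral.integral_add_adjacent_intervals
        (hf.intervalIntegrable (μ := volume) 0 a) (hf.intervalIntegrable (μ := volume) a y)
      simp only [hFdef]
      linarith [h]
    have hmono : (y - a) ≤ ∫ z in a..y, f z := by
      have h1 : (∫ z in a..y, (1:ℝ)) ≤ ∫ z in a..y, f z := by
        apply intervalIntegral.integral_mono_on hay (intervalIntegrable_const)
          (hf.intervalIntegrable a y)
        intro x hx
        exact ha x hx.1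
      simpa using h1
    linarith
  -- v 0 = 0 by square integrability
  have hv0 : v 0 = 0 := by
    by_contra hc
    set b : ℝ := a + |F a| with hbdef
    have hFb : ∀ x, x ∈ Set.Ici b → 0 ≤ F x := by
      intro x hx
      have hax : a ≤ x := by
        have := abs_nonneg (F a); simp only [Set.mem_Ici, hbdef] at hx; linarith
      have := hFgrow x hax
      have h2 : -F a ≤ |F a| := neg_le_abs _
      simp only [Set.mem_Ici, hbdef] at hx
      linarith
    apply not_memL2_aux v (v 0) hc b _ hv2
    intro x hx
    rw [hvform x]
    rw [norm_mul, Complex.norm_real, Real.norm_eq_abs, abs_of_pos (Real.exp_pos _)]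
    nlinarith [Real.one_le_exp (hFb x hx), norm_nonneg (v 0)]
  have hvzero : ∀ y, v y = 0 := by
    intro y; rw [hvform y, hv0, zero_mul]
  refine ⟨hvzero, η 0, ?_⟩
  -- η = u
  have hηu : ∀ y, η y = u y := by
    intro y
    obtain ⟨e1, e2, e3⟩ := hsys y
    rw [hvzero y] at e2
    apply mul_left_cancel₀ (Complex.ofReal_ne_zero.mpr hξ)
    linear_combination e2
  -- ODE for η : η' = -f η
  have hηode : ∀ y, deriv η y = ((fun z => -f z) y : ℝ) * η y := by
    intro y
    obtain ⟨e1, e2, e3⟩ := hsys y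
    rw [hvzero y] at e3
    rw [← hηu y] at e3
    apply mul_left_cancel₀ Complex.I_ne_zero
    push_cast
    linear_combination -e3
  have hηform := ode_solve_aux (fun z => -f z) hf.neg η hηd hηode
  intro y
  have hneg : (∫ z in (0:ℝ)..y, -f z) = -(∫ z in (0:ℝ)..y, f z) := by
    simp [intervalIntegral.integral_neg]
  constructor
  · rw [hηform y, hneg]
  · rw [← hηu y, hηform y, hneg]
end

section
/- Let f : ℝ → ℝ be continuous with f(y) → +∞ as y → +∞ and f(y) → −∞ as y → −∞, and F(y) = ∫₀^y f(z) dz. Let ξ, E ∈ ℝ with ξ ≠ 0, and suppose η, u : ℝ → ℂ are differentiable, square-integrable, not both identically zero, and (η, u, 0) satisfies the fibered shallow-water system with profile f, wavenumber ξ and frequency E (i.e. the third component v vanishes identically). Then E = ξ, u = η, and there exists c ∈ ℂ∖{0} with η(y) = c·e^{−F(y)} for all y. In particular E = −ξ is impossible for a nontrivial solution with vanishing third component. -/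
open MeasureTheory Filter

/-- Unique solution of `η' = s f η`. -/
lemma ode_exp (f : ℝ → ℝ) (hf : Continuous f) (η : ℝ → ℂ)
    (hηd : Differentiable ℝ η) (s : ℂ)
    (hde : ∀ y, deriv η y = s * (f y : ℂ) * η y) :
    ∀ y, η y = η 0 * Complex.exp (s * ((∫ z in (0:ℝ)..y, f z : ℝ) : ℂ)) := by
  set F : ℝ → ℝ := fun y => ∫ z in (0:ℝ)..y, f z with hF
  have hFd : ∀ y, HasDerivAt F (f y) y := by
    intro y
    exact intervalIntegral.integral_hasDerivAt_right
      (hf.intervalIntegrable _ _) (hf.stronglyMeasurableAtFilter _ _)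
      hf.continuousAt
  set g : ℝ → ℂ := fun y => η y * Complex.exp (-s * (F y : ℂ)) with hg
  have hgd : ∀ y, HasDerivAt g 0 y := by
    intro y
    have h1 : HasDerivAt (fun y => ((F y : ℝ) : ℂ)) ((f y : ℝ) : ℂ) y :=
      (hFd y).ofReal_comp
    have h2 : HasDerivAt (fun y => Complex.exp (-s * (F y : ℂ)))
        (-s * (f y : ℂ) * Complex.exp (-s * (F y : ℂ))) y := by
      have := ((h1.const_mul (-s)).cexp)
      simpa [mul_comm] using this
    have h3 := ((hηd y).hasDerivAt.mul h2)
    have : deriv η y * Complex.exp (-s * (F y : ℂ)) +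
        η y * (-s * (f y : ℂ) * Complex.exp (-s * (F y : ℂ))) = 0 := by
      rw [hde y]; ring
    rw [show (0:ℂ) = deriv η y * Complex.exp (-s * (F y : ℂ)) +
        η y * (-s * (f y : ℂ) * Complex.exp (-s * (F y : ℂ))) from this.symm]
    exact h3
  have hconst : ∀ y, g y = g 0 := by
    intro y
    exact is_const_of_deriv_eq_zero (fun x => (hgd x).differentiableAt)
      (fun x => (hgd x).deriv) y 0
  intro y
  have h := hconst y
  have h0 : F 0 = 0 := by simp [hF]
  rw [hg] at h
  simp only [h0, Complex.ofReal_zero, mul_zero, Complex.exp_zero, mul_one] at h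
  have key : η y * (Complex.exp (-s * (F y : ℂ)) * Complex.exp (s * (F y : ℂ)))
      = η 0 * Complex.exp (s * (F y : ℂ)) := by
    rw [← mul_assoc, h]
  rw [← Complex.exp_add] at key
  simpa using key

lemma not_L2_of_lower_bound (η : ℝ → ℂ) (hη2 : MemLp η 2 volume)
    (Y' : ℝ) (c : ℝ) (hc : 0 < c) (hb : ∀ y, Y' ≤ y → c ≤ ‖η y‖) : False := by
  have hε : (⟨c, hc.le⟩ : NNReal) ≠ 0 := by
    simp [← NNReal.coe_eq_zero]
    positivity
  have hmeas := hη2.meas_ge_lt_top (by norm_num) (by norm_num) hε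
  have hsub : Set.Ici Y' ⊆ {x | (⟨c, hc.le⟩ : NNReal) ≤ ‖η x‖₊} := by
    intro y hy
    simp only [Set.mem_setOf_eq, ← NNReal.coe_le_coe, coe_nnnorm]
    exact hb y hy
  have h1 : (⊤ : ENNReal) ≤ volume {x | (⟨c, hc.le⟩ : NNReal) ≤ ‖η x‖₊} := by
    rw [← Real.volume_Ici (a := Y')]
    exact measure_mono hsub
  exact absurd hmeas (not_lt_of_ge h1)

lemma F_event_nonneg (f : ℝ → ℝ) (hf : Continuous f)
    (hftop : Tendsto f atTop atTop) :
    ∃ Y' : ℝ, ∀ y, Y' ≤ y → 0 ≤ ∫ z in (0:ℝ)..y, f z := by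
  obtain ⟨Y, hY⟩ := eventually_atTop.mp (hftop.eventually_ge_atTop 1)
  set F0 := ∫ z in (0:ℝ)..Y, f z with hF0
  refine ⟨max Y (Y - F0), fun y hy => ?_⟩
  have hYy : Y ≤ y := le_trans (le_max_left _ _) hy
  have hy2 : Y - F0 ≤ y := le_trans (le_max_right _ _) hy
  have hsplit : ∫ z in (0:ℝ)..y, f z = F0 + ∫ z in Y..y, f z :=
    (intervalIntegral.integral_add_adjacent_intervals
      (hf.intervalIntegrable _ _) (hf.intervalIntegrable _ _)).symm
  have hmono : (y - Y) ≤ ∫ z in Y..y, f z := by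
    have h1 : ∫ z in Y..y, (1:ℝ) = y - Y := by simp
    rw [← h1]
    apply intervalIntegral.integral_mono_on hYy intervalIntegrable_const
      (hf.intervalIntegrable _ _)
    intro z hz
    exact hY z hz.1
  rw [hsplit]
  linarith

/-- **Solutions with vanishing third component are Kelvin modes.** If `f` is
continuous with `f(y) → ±∞` as `y → ±∞`, `ξ ≠ 0`, and `(η, u, 0)` is a
nontrivial differentiable square-integrable solution of the fibered
shallow-water system at frequency `E`, then `E = ξ`, `u = η`, and
`η = c e^{-F}` for some `c ≠ 0`. In particular `E = -ξ` is impossible. -/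
theorem vanishing_third_component_is_kelvin
    (f : ℝ → ℝ) (hf : Continuous f)
    (hftop : Tendsto f atTop atTop) (hfbot : Tendsto f atBot atBot)
    (ξ E : ℝ) (hξ : ξ ≠ 0)
    (η u : ℝ → ℂ)
    (hηd : Differentiable ℝ η) (hud : Differentiable ℝ u)
    (hη2 : MemLp η 2 volume) (hu2 : MemLp u 2 volume)
    (hnt : ¬ (∀ y : ℝ, η y = 0 ∧ u y = 0))
    (hsys : FiberedShallowWater f ξ E η u (fun _ => 0)) :
    E = ξ ∧ (∀ y : ℝ, u y = η y) ∧
    ∃ c : ℂ, c ≠ 0 ∧ ∀ y : ℝ,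
      η y = c * (Real.exp (-(∫ z in (0:ℝ)..y, f z)) : ℂ) := by
  have hξC : (ξ : ℂ) ≠ 0 := by exact_mod_cast hξ
  have e1 : ∀ y, (ξ : ℂ) * u y = (E : ℂ) * η y := by
    intro y; have h := (hsys y).1; simpa using h
  have e2 : ∀ y, (ξ : ℂ) * η y = (E : ℂ) * u y := by
    intro y; have h := (hsys y).2.1; simpa using h
  have e3 : ∀ y, deriv η y = -(f y : ℂ) * u y := by
    intro y
    have h := (hsys y).2.2
    simp only [mul_zero] at h
    linear_combination Complex.I * h + (deriv η y + (f y : ℂ) * u y) * Complex.I_sq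
  have hcases : E = ξ ∨ E = -ξ := by
    by_contra hc
    push_neg at hc
    have hne : ((E : ℂ) - ξ) * ((E : ℂ) + ξ) ≠ 0 := by
      apply mul_ne_zero
      · rw [sub_ne_zero]; exact_mod_cast hc.1
      · intro h
        apply hc.2
        have : (E : ℂ) = -(ξ : ℂ) := by linear_combination h
        exact_mod_cast this
    apply hnt
    intro y
    have hsq : ((E : ℂ) - ξ) * ((E : ℂ) + ξ) * η y = 0 := by
      linear_combination -(E : ℂ) * e1 y - (ξ : ℂ) * e2 y
    have hη0 : η y = 0 := by
      rcases mul_eq_zero.mp hsq with h | h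
      · exact absurd h hne
      · exact h
    refine ⟨hη0, ?_⟩
    have := e1 y
    rw [hη0, mul_zero] at this
    exact (mul_eq_zero.mp this).resolve_left hξC
  rcases hcases with hE | hE
  · -- E = ξ : the Kelvin mode
    have hEc : (E : ℂ) = (ξ : ℂ) := by exact_mod_cast hE
    have huη : ∀ y, u y = η y := by
      intro y
      have h := e2 y
      have h2 : (ξ : ℂ) * (η y - u y) = 0 := by
        linear_combination h + u y * hEc
      have := (mul_eq_zero.mp h2).resolve_left hξC
      linear_combination -this
    refine ⟨hE, huη, ?_⟩
    have hderiv : ∀ y, deriv η y = (-1 : ℂ) * (f y : ℂ) * η y := by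
      intro y
      rw [e3 y, huη y]
      ring
    have hform := ode_exp f hf η hηd (-1) hderiv
    have hc0 : η 0 ≠ 0 := by
      intro h0
      apply hnt
      intro y
      have := hform y
      rw [h0, zero_mul] at this
      exact ⟨this, by rw [huη y, this]⟩
    refine ⟨η 0, hc0, fun y => ?_⟩
    rw [hform y]
    congr 1
    rw [Complex.ofReal_exp, Complex.ofReal_neg]
    ring_nf
  · -- E = -ξ : impossible
    exfalso
    subst hE
    have huη : ∀ y, u y = -η y := by
      intro y
      have h := e2 y
      have : (ξ : ℂ) * (η y + u y) = 0 := by push_cast at h ⊢; linear_combination h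
      have := (mul_eq_zero.mp this).resolve_left hξC
      linear_combination this
    have hderiv : ∀ y, deriv η y = (1 : ℂ) * (f y : ℂ) * η y := by
      intro y
      rw [e3 y, huη y]
      ring
    have hform := ode_exp f hf η hηd 1 hderiv
    have hc0 : η 0 ≠ 0 := by
      intro h0
      apply hnt
      intro y
      have := hform y
      rw [h0, zero_mul] at this
      exact ⟨this, by rw [huη y, this]; simp⟩
    obtain ⟨Y', hY'⟩ := F_event_nonneg f hf hftop
    apply not_L2_of_lower_bound η hη2 Y' ‖η 0‖ (norm_pos_iff.mpr hc0)
    intro y hy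
    rw [hform y, norm_mul]
    have hre : ‖Complex.exp (1 * ((∫ z in (0:ℝ)..y, f z : ℝ) : ℂ))‖
        = Real.exp (∫ z in (0:ℝ)..y, f z) := by
      rw [one_mul, Complex.norm_exp, Complex.ofReal_re]
    rw [hre]
    nlinarith [Real.one_le_exp (hY' y hy), norm_nonneg (η 0)]
end

section
/- Let f : ℝ → ℝ be continuous with f(y) → +∞ as y → +∞ and f(y) → −∞ as y → −∞, and F(y) = ∫₀^y f(z) dz. Let ξ < 0 and E = −ξ > 0. Suppose η, u, v : ℝ → ℂ are differentiable, η, u, v and f·v are square-integrable, η is bounded, and (η,u,v) satisfies the fibered shallow-water system with profile f, wavenumber ξ and frequency E = −ξ. Then there exists c ∈ ℂ with v(y) = c·e^{−F(y)} for all y, and if v is not identically zero then ξ² · ∫_ℝ e^{−2F(y)} dy = ∫_ℝ f(y)²·e^{−2F(y)} dy, i.e. ξ = −‖f e^{−F}‖_{L²} / ‖e^{−F}‖_{L²}. Consequently there is exactly one point on the half-line {0 < E = −ξ} where a branch of spectrum (the Yanai mode) can cross it. -/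
open MeasureTheory Filter

/-- **The Yanai crossing of `E = -ξ` is unique.** Suppose `f` is continuous
with `f(y) → ±∞` as `y → ±∞`, `ξ < 0`, `E = -ξ > 0`, and `(η,u,v)` solves the
fibered shallow-water system with `η, u, v, f·v` square-integrable and `η`
bounded. Then `v = c e^{-F}` with `F(y) = ∫₀^y f`, and if `v ≢ 0` then
`ξ² ∫ e^{-2F} = ∫ f² e^{-2F}`, i.e. `ξ = -‖f e^{-F}‖_{L²}/‖e^{-F}‖_{L²}`. -/
theorem yanai_crossing_unique
    (f : ℝ → ℝ) (hf : Continuous f)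
    (hftop : Tendsto f atTop atTop) (hfbot : Tendsto f atBot atBot)
    (ξ : ℝ) (hξ : ξ < 0)
    (η u v : ℝ → ℂ)
    (hηd : Differentiable ℝ η) (hud : Differentiable ℝ u) (hvd : Differentiable ℝ v)
    (hη2 : MemLp η 2 volume) (hu2 : MemLp u 2 volume) (hv2 : MemLp v 2 volume)
    (hfv2 : MemLp (fun y => (f y : ℂ) * v y) 2 volume)
    (hηbdd : ∃ C : ℝ, ∀ y : ℝ, ‖η y‖ ≤ C)
    (hsys : FiberedShallowWater f ξ (-ξ) η u v) :
    (∃ c : ℂ, ∀ y : ℝ, v y = c * (Real.exp (-(∫ z in (0:ℝ)..y, f z)) : ℂ)) ∧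
    ((∃ y : ℝ, v y ≠ 0) →
      ξ ^ 2 * ∫ y : ℝ, Real.exp (-2 * ∫ z in (0:ℝ)..y, f z)
        = ∫ y : ℝ, (f y) ^ 2 * Real.exp (-2 * ∫ z in (0:ℝ)..y, f z)) := by
  have hξ0 : (ξ : ℂ) ≠ 0 := by exact_mod_cast hξ.ne
  set F : ℝ → ℝ := fun y => ∫ z in (0:ℝ)..y, f z with hFdef
  have hFd : ∀ y, HasDerivAt F (f y) y := fun y =>
    intervalIntegral.integral_hasDerivAt_right (hf.intervalIntegrable _ _)
      (hf.stronglyMeasurableAtFilter _ _) hf.continuousAt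
  have hFdiff : Differentiable ℝ F := fun y => (hFd y).differentiableAt
  have hFcont : Continuous F := hFdiff.continuous
  set Ex : ℝ → ℝ := fun y => Real.exp (-(F y)) with hExdef
  have hExpos : ∀ y, 0 < Ex y := fun y => Real.exp_pos _
  have hExd : ∀ y, HasDerivAt Ex (-(f y) * Ex y) y := by
    intro y
    have h := ((hFd y).neg).exp
    simpa [Ex, mul_comm] using h
  -- Step 1: the ODE `v' = -f v`.
  have hdv : ∀ y, deriv v y = -(f y : ℂ) * v y := by
    intro y
    obtain ⟨e1, e2, e3⟩ := hsys y
    push_cast at e1 e2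
    linear_combination Complex.I * e1 - Complex.I * e2
      + (deriv v y + (f y : ℂ) * v y) * Complex.I_sq
  -- Step 2: `v = v 0 · e^{-F}`.
  have hconst : ∀ y, v y * (Real.exp (F y) : ℂ) = v 0 := by
    have h1 : ∀ y, HasDerivAt (fun y => (Real.exp (F y) : ℂ))
        ((Real.exp (F y) * f y : ℝ) : ℂ) y := fun y => ((hFd y).exp).ofReal_comp
    have hd : Differentiable ℝ (fun y => v y * (Real.exp (F y) : ℂ)) :=
      fun y => ((hvd y).hasDerivAt.mul (h1 y)).differentiableAt
    have hz : ∀ y, deriv (fun y => v y * (Real.exp (F y) : ℂ)) y = 0 := by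
      intro y
      rw [show deriv (fun y => v y * (Real.exp (F y) : ℂ)) y = _ from
        ((hvd y).hasDerivAt.mul (h1 y)).deriv, hdv y, Complex.ofReal_mul]
      ring
    intro y
    have h := is_const_of_deriv_eq_zero hd hz y 0
    simpa [F] using h
  set c : ℂ := v 0 with hcdef
  have hvF : ∀ y, v y = c * (Real.exp (-(F y)) : ℂ) := by
    intro y
    have hne : ((Real.exp (F y) : ℝ) : ℂ) ≠ 0 := by
      exact_mod_cast Real.exp_ne_zero (F y)
    rw [Real.exp_neg, Complex.ofReal_inv, eq_comm, mul_inv_eq_iff_eq_mul₀ hne]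
    exact (hconst y).symm
  refine ⟨⟨c, hvF⟩, ?_⟩
  rintro ⟨y0, hy0⟩
  have hc0 : c ≠ 0 := by
    intro h
    exact hy0 (by rw [hvF y0, h, zero_mul])
  -- Integrability of `e^{-2F}` and `f² e^{-2F}`.
  have hcn : ‖c‖ ≠ 0 := norm_ne_zero_iff.mpr hc0
  have hExm : MemLp Ex 2 volume := by
    have heq : (fun y => ‖v y‖) = fun y => ‖c‖ * Ex y := by
      funext y
      rw [hvF y, norm_mul, Complex.norm_real, Real.norm_eq_abs,
        abs_of_pos (hExpos y)]
    have h1 := hv2.norm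
    rw [heq] at h1
    have h2 := h1.const_mul ‖c‖⁻¹
    have h3 : (fun y => ‖c‖⁻¹ * (‖c‖ * Ex y)) = Ex := by
      funext y
      rw [← mul_assoc, inv_mul_cancel₀ hcn, one_mul]
    rwa [h3] at h2
  have hExsq : ∀ y, Ex y ^ 2 = Real.exp (-2 * F y) := by
    intro y
    rw [sq, ← Real.exp_add]
    congr 1
    simp [Ex]
    ring
  have hI1 : Integrable (fun y => Real.exp (-2 * F y)) volume := by
    have h := (memLp_two_iff_integrable_sq hExm.aestronglyMeasurable).mp hExm
    exact h.congr (Filter.Eventually.of_forall hExsq)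
  have hGm : MemLp (fun y => |f y| * Ex y) 2 volume := by
    have heq : (fun y => ‖(f y : ℂ) * v y‖) = fun y => ‖c‖ * (|f y| * Ex y) := by
      funext y
      rw [hvF y, norm_mul, norm_mul, Complex.norm_real, Complex.norm_real,
        Real.norm_eq_abs, Real.norm_eq_abs, abs_of_pos (hExpos y)]
      ring
    have h1 := hfv2.norm
    rw [heq] at h1
    have h2 := h1.const_mul ‖c‖⁻¹
    have h3 : (fun y => ‖c‖⁻¹ * (‖c‖ * (|f y| * Ex y))) = fun y => |f y| * Ex y := by
      funext y
      rw [← mul_assoc, inv_mul_cancel₀ hcn, one_mul]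
    rwa [h3] at h2
  have hI2 : Integrable (fun y => f y ^ 2 * Real.exp (-2 * F y)) volume := by
    have h := (memLp_two_iff_integrable_sq hGm.aestronglyMeasurable).mp hGm
    refine h.congr (Filter.Eventually.of_forall fun y => ?_)
    show (|f y| * Ex y) ^ 2 = f y ^ 2 * Real.exp (-2 * F y)
    rw [mul_pow, sq_abs, hExsq y]
  set g : ℝ → ℝ := fun y => (f y ^ 2 - ξ ^ 2) * Real.exp (-2 * F y) with hgdef
  have hgint : Integrable g volume := by
    have h := hI2.sub (hI1.const_mul (ξ ^ 2))
    refine h.congr (Filter.Eventually.of_forall fun y => ?_)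
    simp [g, sub_mul]
  have hgc : Continuous g :=
    ((hf.pow 2).sub continuous_const).mul
      (Real.continuous_exp.comp (continuous_const.mul hFcont))
  -- The derivative of `h := η e^{-F}`.
  set K : ℂ := Complex.I * c / ξ with hKdef
  have hKξ : K * ξ = Complex.I * c := by
    rw [hKdef]; field_simp
  have hder : ∀ y, deriv η y
      = (f y : ℂ) * η y + K * ((f y : ℂ) ^ 2 - (ξ : ℂ) ^ 2) * (Ex y : ℂ) := by
    intro y
    obtain ⟨e1, e2, e3⟩ := hsys y
    push_cast at e2 e3
    have hv : v y = c * ((Ex y : ℝ) : ℂ) := hvF y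
    apply mul_left_cancel₀ hξ0
    linear_combination (Complex.I * (ξ : ℂ)) * e3 + (Complex.I ^ 2 * (f y : ℂ)) * e2
      + (-(Complex.I * (ξ : ℂ) ^ 2) - Complex.I ^ 3 * (f y : ℂ) ^ 2) * hv
      + ((ξ : ℂ) * deriv η y - (ξ : ℂ) * (f y : ℂ) * η y
          - Complex.I * c * (f y : ℂ) ^ 2 * ((Ex y : ℝ) : ℂ)) * Complex.I_sq
      - (((f y : ℂ) ^ 2 - (ξ : ℂ) ^ 2) * ((Ex y : ℝ) : ℂ)) * hKξ
  have hhd : ∀ y, HasDerivAt (fun y => η y * (Ex y : ℂ)) (K * ((g y : ℝ) : ℂ)) y := by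
    intro y
    have h1 : HasDerivAt (fun z => (Ex z : ℂ)) ((-(f y) * Ex y : ℝ) : ℂ) y :=
      (hExd y).ofReal_comp
    have h2 := (hηd y).hasDerivAt.mul h1
    have h4 : Real.exp (-2 * F y) = Ex y * Ex y := by
      rw [← Real.exp_add]
      congr 1
      simp [Ex]
      ring
    have h3 : deriv η y * (Ex y : ℂ) + η y * ((-(f y) * Ex y : ℝ) : ℂ)
        = K * ((g y : ℝ) : ℂ) := by
      rw [hder y]
      simp only [g, h4]
      push_cast
      ring
    rw [h3] at h2
    exact h2
  -- `F → +∞` at both ends, hence `η e^{-F} → 0`.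
  have hFtop : Tendsto F atTop atTop := by
    obtain ⟨M, hM⟩ := eventually_atTop.mp (hftop.eventually_ge_atTop 1)
    apply tendsto_atTop_mono' atTop
      (show ∀ᶠ y in atTop, F M + (y - M) ≤ F y from ?_)
    · exact tendsto_atTop_add_const_left _ _ (tendsto_atTop_add_const_right _ _ tendsto_id)
    · filter_upwards [eventually_ge_atTop M] with y hy
      have hadd : F M + ∫ z in M..y, f z = F y :=
        intervalIntegral.integral_add_adjacent_intervals
          (hf.intervalIntegrable 0 M) (hf.intervalIntegrable M y)
      have h1 : ∫ z in M..y, (1 : ℝ) = y - M := by simp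
      have hmono : (y - M) ≤ ∫ z in M..y, f z := by
        rw [← h1]
        exact intervalIntegral.integral_mono_on hy (intervalIntegrable_const)
          (hf.intervalIntegrable M y) (fun x hx => hM x hx.1)
      linarith
  have hFbot : Tendsto F atBot atTop := by
    obtain ⟨N, hN⟩ := eventually_atBot.mp (hfbot.eventually_le_atBot (-1))
    apply tendsto_atTop_mono' atBot
      (show ∀ᶠ y in atBot, F N + (N - y) ≤ F y from ?_)
    · exact tendsto_atTop_add_const_left _ _
        (tendsto_atTop_add_const_left _ _ tendsto_neg_atBot_atTop)
    · filter_upwards [eventually_le_atBot N] with y hy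
      have hadd : F y + ∫ z in y..N, f z = F N :=
        intervalIntegral.integral_add_adjacent_intervals
          (hf.intervalIntegrable 0 y) (hf.intervalIntegrable y N)
      have h1 : ∫ z in y..N, (-1 : ℝ) = y - N := by
        rw [intervalIntegral.integral_const, smul_eq_mul]
        ring
      have hmono : (∫ z in y..N, f z) ≤ y - N := by
        rw [← h1]
        exact intervalIntegral.integral_mono_on hy (hf.intervalIntegrable y N)
          (intervalIntegrable_const) (fun x hx => hN x hx.2)
      linarith
  have hExtop : Tendsto Ex atTop (nhds 0) :=
    Real.tendsto_exp_atBot.comp (tendsto_neg_atBot_iff.mpr hFtop)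
  have hExbot : Tendsto Ex atBot (nhds 0) :=
    Real.tendsto_exp_atBot.comp (tendsto_neg_atBot_iff.mpr hFbot)
  obtain ⟨C, hC⟩ := hηbdd
  have hbound : ∀ y, ‖η y * (Ex y : ℂ)‖ ≤ C * Ex y := by
    intro y
    rw [norm_mul, Complex.norm_real, Real.norm_eq_abs, abs_of_pos (hExpos y)]
    exact mul_le_mul_of_nonneg_right (hC y) (hExpos y).le
  have htop0 : Tendsto (fun y => η y * (Ex y : ℂ)) atTop (nhds 0) := by
    apply squeeze_zero_norm hbound
    simpa using hExtop.const_mul C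
  have hbot0 : Tendsto (fun y => η y * (Ex y : ℂ)) atBot (nhds 0) := by
    apply squeeze_zero_norm hbound
    simpa using hExbot.const_mul C
  -- FTC and passing to the limit.
  have hKgint : ∀ a b : ℝ, IntervalIntegrable (fun y => K * ((g y : ℝ) : ℂ)) volume a b :=
    fun a b => (continuous_const.mul (Complex.continuous_ofReal.comp hgc)).intervalIntegrable a b
  have hFTC : ∀ R : ℝ, K * ((∫ y in (-R)..R, g y : ℝ) : ℂ)
      = η R * (Ex R : ℂ) - η (-R) * (Ex (-R) : ℂ) := by
    intro R
    have h := intervalIntegral.integral_eq_sub_of_hasDerivAt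
      (f := fun y => η y * (Ex y : ℂ)) (f' := fun y => K * ((g y : ℝ) : ℂ))
      (fun x _ => hhd x) (hKgint (-R) R)
    rw [← h, intervalIntegral.integral_const_mul, intervalIntegral.integral_ofReal]
  have hlim1 : Tendsto (fun R : ℝ => K * ((∫ y in (-R)..R, g y : ℝ) : ℂ))
      atTop (nhds (K * ((∫ y, g y : ℝ) : ℂ))) := by
    have h := intervalIntegral_tendsto_integral hgint tendsto_neg_atTop_atBot tendsto_id
    exact ((Complex.continuous_ofReal.tendsto _).comp h).const_mul K
  have hlim2 : Tendsto (fun R : ℝ => η R * (Ex R : ℂ) - η (-R) * (Ex (-R) : ℂ))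
      atTop (nhds 0) := by
    simpa using htop0.sub (hbot0.comp tendsto_neg_atTop_atBot)
  have hKg0 : K * ((∫ y, g y : ℝ) : ℂ) = 0 := by
    apply tendsto_nhds_unique _ hlim2
    simpa only [hFTC] using hlim1
  have hK0 : K ≠ 0 := by
    rw [hKdef]
    exact div_ne_zero (mul_ne_zero Complex.I_ne_zero hc0) hξ0
  have hg0 : (∫ y, g y) = 0 := by
    have h := (mul_eq_zero.mp hKg0).resolve_left hK0
    exact_mod_cast h
  have hsplit : (∫ y, g y)
      = (∫ y, f y ^ 2 * Real.exp (-2 * F y)) - ξ ^ 2 * ∫ y, Real.exp (-2 * F y) := by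
    have heq : g = fun y => f y ^ 2 * Real.exp (-2 * F y)
        - ξ ^ 2 * Real.exp (-2 * F y) := by
      funext y
      show (f y ^ 2 - ξ ^ 2) * Real.exp (-2 * F y) = _
      ring
    rw [heq, integral_sub hI2 (hI1.const_mul _), integral_const_mul]
  show ξ ^ 2 * ∫ y : ℝ, Real.exp (-2 * F y) = ∫ y : ℝ, f y ^ 2 * Real.exp (-2 * F y)
  linarith [hg0, hsplit]
end

section
/- Let f : ℝ → ℝ be continuously differentiable, and let ξ, E ∈ ℝ with E ≠ 0 and E² ≠ ξ². Let v : ℝ → ℂ be twice differentiable and define η(y) := i·(ξ·f(y)·v(y) − E·v'(y))/(E² − ξ²) and u(y) := i·(E·f(y)·v(y) − ξ·v'(y))/(E² − ξ²). Then: (a) (η, u, v) satisfies the fibered shallow-water system with profile f, wavenumber ξ and frequency E if and only if v satisfies the Sturm–Liouville equation −v''(y) + (f(y)² + (ξ/E)·f'(y))·v(y) = (E² − ξ²)·v(y) for all y ∈ ℝ; (b) moreover, if (η̃, ũ, v) is any differentiable solution of the fibered shallow-water system with the same third component v, then η̃ = η and ũ = u. -/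
open MeasureTheory Filter

/-- **Elimination of the first two components.** For `E ≠ 0`, `E² ≠ ξ²` and
`η, u` defined from `v` by `η = i(ξ f v - E v')/(E² - ξ²)`,
`u = i(E f v - ξ v')/(E² - ξ²)`: (a) `(η,u,v)` solves the fibered
shallow-water system iff `v` solves the Sturm–Liouville equation
`-v'' + (f² + (ξ/E) f') v = (E² - ξ²) v`; (b) any solution of the system with
third component `v` has first two components equal to `η, u`. -/
theorem elimination_sturm_liouville
    (f : ℝ → ℝ) (hf : ContDiff ℝ 1 f)
    (ξ E : ℝ) (hE : E ≠ 0) (hEξ : E ^ 2 ≠ ξ ^ 2)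
    (v : ℝ → ℂ) (hvd : Differentiable ℝ v) (hvd2 : Differentiable ℝ (deriv v))
    (η u : ℝ → ℂ)
    (hη : ∀ y : ℝ, η y =
      Complex.I * ((ξ : ℂ) * (f y : ℂ) * v y - (E : ℂ) * deriv v y)
        / ((E : ℂ) ^ 2 - (ξ : ℂ) ^ 2))
    (hu : ∀ y : ℝ, u y =
      Complex.I * ((E : ℂ) * (f y : ℂ) * v y - (ξ : ℂ) * deriv v y)
        / ((E : ℂ) ^ 2 - (ξ : ℂ) ^ 2)) :
    (FiberedShallowWater f ξ E η u v ↔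
      ∀ y : ℝ, -(deriv (deriv v) y)
          + (((f y) ^ 2 + (ξ / E) * deriv f y : ℝ) : ℂ) * v y
        = (((E ^ 2 - ξ ^ 2 : ℝ)) : ℂ) * v y) ∧
    (∀ η' u' : ℝ → ℂ, Differentiable ℝ η' → Differentiable ℝ u' →
      FiberedShallowWater f ξ E η' u' v →
      (∀ y : ℝ, η' y = η y ∧ u' y = u y)) := by
  have hE' : (E : ℂ) ≠ 0 := Complex.ofReal_ne_zero.mpr hE
  have hD : (E : ℂ) ^ 2 - (ξ : ℂ) ^ 2 ≠ 0 := by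
    intro h
    apply hEξ
    have : ((E ^ 2 - ξ ^ 2 : ℝ) : ℂ) = 0 := by push_cast; linear_combination h
    have := Complex.ofReal_eq_zero.mp this
    linarith
  have hfd : Differentiable ℝ f := hf.differentiable one_ne_zero
  have hderiv : ∀ y : ℝ, deriv η y =
      Complex.I * ((ξ : ℂ) * ((deriv f y : ℝ) : ℂ) * v y
        + (ξ : ℂ) * (f y : ℂ) * deriv v y - (E : ℂ) * deriv (deriv v) y)
        / ((E : ℂ) ^ 2 - (ξ : ℂ) ^ 2) := by
    intro y
    have h1 : HasDerivAt (fun y : ℝ => (f y : ℂ)) ((deriv f y : ℝ) : ℂ) y :=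
      ((hfd y).hasDerivAt).ofReal_comp
    have h2 : HasDerivAt (fun y => Complex.I * ((ξ : ℂ) * (f y : ℂ) * v y
          - (E : ℂ) * deriv v y) / ((E : ℂ) ^ 2 - (ξ : ℂ) ^ 2))
        (Complex.I * ((ξ : ℂ) * ((deriv f y : ℝ) : ℂ) * v y
          + (ξ : ℂ) * (f y : ℂ) * deriv v y - (E : ℂ) * deriv (deriv v) y)
          / ((E : ℂ) ^ 2 - (ξ : ℂ) ^ 2)) y := by
      have hv := (hvd y).hasDerivAt
      have hv2 := (hvd2 y).hasDerivAt
      have := ((((h1.const_mul (ξ : ℂ)).mul hv).sub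
        (hv2.const_mul (E : ℂ))).const_mul Complex.I).div_const
        ((E : ℂ) ^ 2 - (ξ : ℂ) ^ 2)
      exact this
    have : η = fun y => Complex.I * ((ξ : ℂ) * (f y : ℂ) * v y
        - (E : ℂ) * deriv v y) / ((E : ℂ) ^ 2 - (ξ : ℂ) ^ 2) := funext hη
    rw [this]
    exact h2.deriv
  constructor
  · constructor
    · intro h y
      have key := (h y).2.2
      rw [hderiv y, hu y] at key
      field_simp at key
      push_cast
      field_simp
      refine mul_left_cancel₀ hD ?_
      linear_combination ((E : ℂ) ^ 2 - (ξ : ℂ) ^ 2) * key -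
        ((E : ℂ) ^ 2 - (ξ : ℂ) ^ 2) * (-((ξ : ℂ) * (((deriv f y : ℝ) : ℂ) * v y + (f y : ℂ) * deriv v y) - (E : ℂ) * deriv (deriv v) y)
          - (f y : ℂ) * (v y * (f y : ℂ) * (E : ℂ) - (ξ : ℂ) * deriv v y)) * Complex.I_sq
    · intro hSL y
      refine ⟨?_, ?_, ?_⟩
      · rw [hη y, hu y]; field_simp; ring
      · rw [hη y, hu y]; field_simp; ring
      · rw [hderiv y, hu y]
        have := hSL y
        push_cast at this
        field_simp at this ⊢
        linear_combination this + (-((ξ : ℂ) * (((deriv f y : ℝ) : ℂ) * v y + (f y : ℂ) * deriv v y) - (E : ℂ) * deriv (deriv v) y)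
          - (f y : ℂ) * (v y * (f y : ℂ) * (E : ℂ) - (ξ : ℂ) * deriv v y)) * Complex.I_sq
  · intro η' u' _ _ h y
    have h1 := (h y).1
    have h2 := (h y).2.1
    constructor
    · rw [hη y]
      field_simp
      linear_combination -((E : ℂ) * h1) - (ξ : ℂ) * h2
    · rw [hu y]
      field_simp
      linear_combination -((ξ : ℂ) * h1) - (E : ℂ) * h2
end

section
/- Let f : ℝ → ℝ be continuously differentiable with M := sup_{y∈ℝ} |f'(y)| < ∞. Let E > 0 and ξ ∈ ℝ with ξ² > E², and set μ := ξ/E. Suppose v : ℝ → ℂ is twice continuously differentiable, not identically zero, satisfies −v''(y) + (f(y)² + μ·f'(y))·v(y) = (E² − ξ²)·v(y) for all y ∈ ℝ, with v, v', f·v ∈ L²(ℝ) and with v'(y)·conj(v(y)) → 0 and f(y)·|v(y)|² → 0 as |y| → ∞. Then E·|ξ − E| ≤ M and E·|ξ + E| ≤ M. (Hence eigenvalue branches of the shallow-water Hamiltonian lying in the sectors 0 < E < |ξ| tend to 0 as |ξ| → ∞ when f' is bounded.) -/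
open MeasureTheory Filter

private lemma ftc_zero {g g' : ℝ → ℝ} (hd : ∀ y, HasDerivAt g (g' y) y)
    (hi : Integrable g') (ht : Tendsto g atTop (nhds 0))
    (hb : Tendsto g atBot (nhds 0)) : ∫ y, g' y = 0 := by
  rw [← intervalIntegral.integral_Iic_add_Ioi (b := (0:ℝ)) hi.integrableOn hi.integrableOn,
    integral_Iic_of_hasDerivAt_of_tendsto' (fun x _ => hd x) hi.integrableOn hb,
    integral_Ioi_of_hasDerivAt_of_tendsto' (fun x _ => hd x) hi.integrableOn ht]
  ring


set_option maxHeartbeats 1000000 in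
/-- **Branches in the sectors `0 < E < |ξ|` are pinched when `f'` is
bounded.** If `f` is `C¹` with `|f'| ≤ M`, `E > 0`, `ξ² > E²`, and `v ≢ 0` is
a `C²` solution of the Sturm–Liouville equation
`-v'' + (f² + (ξ/E) f') v = (E² - ξ²) v` with `v, v', f·v ∈ L²` and the
boundary terms `v' v̄` and `f |v|²` vanishing at `±∞`, then
`E |ξ - E| ≤ M` and `E |ξ + E| ≤ M`. -/
theorem branch_bound_bounded_derivative
    (f : ℝ → ℝ) (hf : ContDiff ℝ 1 f)
    (M : ℝ) (hM : ∀ y : ℝ, |deriv f y| ≤ M)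
    (E ξ : ℝ) (hE : 0 < E) (hξE : E ^ 2 < ξ ^ 2)
    (v : ℝ → ℂ) (hv : ContDiff ℝ 2 v) (hv0 : ∃ y : ℝ, v y ≠ 0)
    (hode : ∀ y : ℝ, -(deriv (deriv v) y)
        + (((f y) ^ 2 + (ξ / E) * deriv f y : ℝ) : ℂ) * v y
      = (((E ^ 2 - ξ ^ 2 : ℝ)) : ℂ) * v y)
    (hv2 : MemLp v 2 volume) (hdv2 : MemLp (deriv v) 2 volume)
    (hfv2 : MemLp (fun y => (f y : ℂ) * v y) 2 volume)
    (hbc1 : Tendsto (fun y => deriv v y * (starRingEnd ℂ) (v y)) atTop (nhds 0))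
    (hbc2 : Tendsto (fun y => deriv v y * (starRingEnd ℂ) (v y)) atBot (nhds 0))
    (hbc3 : Tendsto (fun y => f y * ‖v y‖ ^ 2) atTop (nhds 0))
    (hbc4 : Tendsto (fun y => f y * ‖v y‖ ^ 2) atBot (nhds 0)) :
    E * |ξ - E| ≤ M ∧ E * |ξ + E| ≤ M := by
  -- basic regularity
  have hv1 : Differentiable ℝ v := hv.differentiable (by norm_num)
  have hvd : ∀ y, HasDerivAt v (deriv v y) y := fun y => (hv1 y).hasDerivAt
  have hcdv : ContDiff ℝ 1 (deriv v) := by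
    have h2 : ContDiff ℝ ((1:ℕ) + 1) v := by exact_mod_cast hv
    exact (contDiff_succ_iff_deriv.mp h2).2.2
  have hvdd : ∀ y, HasDerivAt (deriv v) (deriv (deriv v) y) y :=
    fun y => (hcdv.differentiable one_ne_zero y).hasDerivAt
  have hvc : Continuous v := hv.continuous
  have hdvc : Continuous (deriv v) := hcdv.continuous
  have hfc : Continuous f := hf.continuous
  have hfd : ∀ y, HasDerivAt f (deriv f y) y := fun y => (hf.differentiable one_ne_zero y).hasDerivAt
  have hf'c : Continuous (deriv f) := hf.continuous_deriv le_rfl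
  have hM0 : 0 ≤ M := le_trans (abs_nonneg _) (hM 0)
  -- rearranged ODE
  have hode' : ∀ y, deriv (deriv v) y
      = ((f y ^ 2 + (ξ / E) * deriv f y + ξ ^ 2 - E ^ 2 : ℝ) : ℂ) * v y := by
    intro y
    have h := hode y
    push_cast at h ⊢
    linear_combination -h
  -- integrability facts
  have iN : Integrable (fun y => ‖v y‖ ^ 2) :=
    (memLp_two_iff_integrable_sq_norm hv2.aestronglyMeasurable).mp hv2
  have iK : Integrable (fun y => ‖deriv v y‖ ^ 2) :=
    (memLp_two_iff_integrable_sq_norm hdv2.aestronglyMeasurable).mp hdv2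
  have iF0 : Integrable (fun y => ‖(f y : ℂ) * v y‖ ^ 2) :=
    (memLp_two_iff_integrable_sq_norm hfv2.aestronglyMeasurable).mp hfv2
  have hnfv : ∀ y, ‖(f y : ℂ) * v y‖ ^ 2 = f y ^ 2 * ‖v y‖ ^ 2 := by
    intro y
    rw [norm_mul, mul_pow, Complex.norm_real, Real.norm_eq_abs, sq_abs]
  have iF : Integrable (fun y => f y ^ 2 * ‖v y‖ ^ 2) :=
    iF0.congr (Eventually.of_forall fun y => hnfv y)
  have iI : Integrable (fun y => deriv f y * ‖v y‖ ^ 2) := by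
    refine (iN.const_mul M).mono' ?_ ?_
    · exact (hf'c.mul ((hvc.norm).pow 2)).aestronglyMeasurable
    · filter_upwards with y
      rw [Real.norm_eq_abs, abs_mul, abs_of_nonneg (pow_nonneg (norm_nonneg (v y)) 2)]
      exact mul_le_mul_of_nonneg_right (hM y) (pow_nonneg (norm_nonneg (v y)) 2)
  have iJ : Integrable (fun y => f y * (deriv v y * (starRingEnd ℂ) (v y)).re) := by
    refine ((iK.add iF0).const_mul (1/2)).mono' ?_ ?_
    · exact (hfc.mul ((Complex.continuous_re.comp
        (hdvc.mul (Complex.continuous_conj.comp hvc))))).aestronglyMeasurable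
    · filter_upwards with y
      have h1 : ‖f y * (deriv v y * (starRingEnd ℂ) (v y)).re‖
          ≤ ‖deriv v y‖ * ‖(f y : ℂ) * v y‖ := by
        rw [Real.norm_eq_abs, abs_mul]
        calc |f y| * |(deriv v y * (starRingEnd ℂ) (v y)).re|
            ≤ |f y| * ‖deriv v y * (starRingEnd ℂ) (v y)‖ := by
              exact mul_le_mul_of_nonneg_left (Complex.abs_re_le_norm _) (abs_nonneg _)
          _ = ‖deriv v y‖ * ‖(f y : ℂ) * v y‖ := by
              simp only [norm_mul, Complex.norm_conj, Complex.norm_real, Real.norm_eq_abs]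
              ring
      refine h1.trans ?_
      simp only [Pi.add_apply]
      nlinarith [sq_nonneg (‖deriv v y‖ - ‖(f y : ℂ) * v y‖), norm_nonneg (deriv v y),
        norm_nonneg ((f y : ℂ) * v y)]
  -- abbreviations
  set N := ∫ y, ‖v y‖ ^ 2 with hN
  set K := ∫ y, ‖deriv v y‖ ^ 2 with hK
  set Fq := ∫ y, f y ^ 2 * ‖v y‖ ^ 2 with hFq
  set I := ∫ y, deriv f y * ‖v y‖ ^ 2 with hI
  set J := ∫ y, f y * (deriv v y * (starRingEnd ℂ) (v y)).re with hJ
  -- derivative of re (v' * conj v)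
  have hprod : ∀ y, HasDerivAt (fun y => deriv v y * (starRingEnd ℂ) (v y))
      (deriv (deriv v) y * (starRingEnd ℂ) (v y)
        + deriv v y * (starRingEnd ℂ) (deriv v y)) y := by
    intro y
    have h := (hvdd y).mul ((hvd y).star)
    simp only [Complex.star_def] at h
    exact h
  have hg1d : ∀ y, HasDerivAt (fun y => (deriv v y * (starRingEnd ℂ) (v y)).re)
      ((f y ^ 2 + (ξ / E) * deriv f y + ξ ^ 2 - E ^ 2) * ‖v y‖ ^ 2 + ‖deriv v y‖ ^ 2) y := by
    intro y
    have h2 := (Complex.reCLM.hasFDerivAt).comp_hasDerivAt y (hprod y)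
    simp only [Function.comp_def, Complex.reCLM_apply] at h2
    refine h2.congr_deriv ?_
    rw [hode' y, mul_assoc, Complex.mul_conj, Complex.mul_conj, Complex.add_re,
      ← Complex.ofReal_mul, Complex.ofReal_re, Complex.ofReal_re,
      Complex.normSq_eq_norm_sq, Complex.normSq_eq_norm_sq]
  -- first integral identity
  have iI' : Integrable (fun y => (ξ / E) * (deriv f y * ‖v y‖ ^ 2)) := iI.const_mul _
  have iA : Integrable (fun y => f y ^ 2 * ‖v y‖ ^ 2 + (ξ / E) * (deriv f y * ‖v y‖ ^ 2)) :=
    iF.add iI'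
  have iN' : Integrable (fun y => (ξ ^ 2 - E ^ 2) * ‖v y‖ ^ 2) := iN.const_mul _
  have iB : Integrable (fun y => (f y ^ 2 * ‖v y‖ ^ 2 + (ξ / E) * (deriv f y * ‖v y‖ ^ 2))
      + (ξ ^ 2 - E ^ 2) * ‖v y‖ ^ 2) := iA.add iN'
  have ig1 : Integrable (fun y =>
      (f y ^ 2 + (ξ / E) * deriv f y + ξ ^ 2 - E ^ 2) * ‖v y‖ ^ 2 + ‖deriv v y‖ ^ 2) :=
    (iB.add iK).congr (Eventually.of_forall fun y => by simp only [Pi.add_apply]; ring)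
  have key1 : Fq + (ξ / E) * I + (ξ ^ 2 - E ^ 2) * N + K = 0 := by
    have h0 : ∫ y, ((f y ^ 2 + (ξ / E) * deriv f y + ξ ^ 2 - E ^ 2) * ‖v y‖ ^ 2
        + ‖deriv v y‖ ^ 2) = 0 := by
      refine ftc_zero hg1d ig1 ?_ ?_
      · have h := (Complex.continuous_re.tendsto 0).comp hbc1
        simpa only [Function.comp_def, Complex.zero_re] using h
      · have h := (Complex.continuous_re.tendsto 0).comp hbc2
        simpa only [Function.comp_def, Complex.zero_re] using h
    have e : (fun y => (f y ^ 2 + (ξ / E) * deriv f y + ξ ^ 2 - E ^ 2) * ‖v y‖ ^ 2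
        + ‖deriv v y‖ ^ 2)
        = (fun y => ((f y ^ 2 * ‖v y‖ ^ 2 + (ξ / E) * (deriv f y * ‖v y‖ ^ 2))
          + (ξ ^ 2 - E ^ 2) * ‖v y‖ ^ 2) + ‖deriv v y‖ ^ 2) := funext fun y => by ring
    rw [e, integral_add iB iK, integral_add iA iN', integral_add iF iI',
      integral_const_mul, integral_const_mul] at h0
    rw [hFq, hI, hN, hK]
    linarith [h0]
  -- derivative of ‖v‖²
  have hnd : ∀ y, HasDerivAt (fun y => ‖v y‖ ^ 2)
      (2 * (deriv v y * (starRingEnd ℂ) (v y)).re) y := by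
    intro y
    have h1 := (hvd y).mul ((hvd y).star)
    simp only [Complex.star_def] at h1
    have h2 := (Complex.reCLM.hasFDerivAt).comp_hasDerivAt y h1
    simp only [Function.comp_def, Complex.reCLM_apply, Pi.mul_apply] at h2
    have hfun : (fun y => (v y * (starRingEnd ℂ) (v y)).re) = fun y => ‖v y‖ ^ 2 := by
      funext y
      rw [Complex.mul_conj, Complex.ofReal_re, Complex.normSq_eq_norm_sq]
    rw [hfun] at h2
    refine h2.congr_deriv ?_
    rw [Complex.add_re]
    have h3 : (v y * (starRingEnd ℂ) (deriv v y)).re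
        = (deriv v y * (starRingEnd ℂ) (v y)).re := by
      rw [← Complex.conj_re (v y * (starRingEnd ℂ) (deriv v y))]
      rw [map_mul, Complex.conj_conj, mul_comm]
    rw [h3]; ring
  have hhd : ∀ y, HasDerivAt (fun y => f y * ‖v y‖ ^ 2)
      (deriv f y * ‖v y‖ ^ 2 + f y * (2 * (deriv v y * (starRingEnd ℂ) (v y)).re)) y :=
    fun y => (hfd y).mul (hnd y)
  have iJ2 : Integrable (fun y => 2 * (f y * (deriv v y * (starRingEnd ℂ) (v y)).re)) :=
    iJ.const_mul _
  have ig2 : Integrable (fun y => deriv f y * ‖v y‖ ^ 2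
      + f y * (2 * (deriv v y * (starRingEnd ℂ) (v y)).re)) :=
    (iI.add iJ2).congr (Eventually.of_forall fun y => by simp only [Pi.add_apply]; ring)
  have key2 : I + 2 * J = 0 := by
    have h0 := ftc_zero hhd ig2 hbc3 hbc4
    have e : (fun y => deriv f y * ‖v y‖ ^ 2
        + f y * (2 * (deriv v y * (starRingEnd ℂ) (v y)).re))
        = (fun y => deriv f y * ‖v y‖ ^ 2
          + 2 * (f y * (deriv v y * (starRingEnd ℂ) (v y)).re)) := funext fun y => by ring
    rw [e, integral_add iI iJ2, integral_const_mul] at h0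
    rw [hI, hJ]
    linarith [h0]
  -- pointwise expansion of ‖v' + s f v‖²
  have hpt : ∀ (s : ℝ) (y : ℝ), ‖deriv v y + (s : ℂ) * ((f y : ℂ) * v y)‖ ^ 2
      = ‖deriv v y‖ ^ 2 + s ^ 2 * (f y ^ 2 * ‖v y‖ ^ 2)
        + 2 * s * (f y * (deriv v y * (starRingEnd ℂ) (v y)).re) := by
    intro s y
    have e1 : ∀ z : ℂ, ‖z‖ ^ 2 = Complex.normSq z := by
      intro z; rw [Complex.sq_norm]
    rw [e1, e1, e1, Complex.normSq_add]
    have e2 : Complex.normSq ((s : ℂ) * ((f y : ℂ) * v y))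
        = s ^ 2 * (f y ^ 2 * Complex.normSq (v y)) := by
      rw [map_mul, map_mul, Complex.normSq_ofReal, Complex.normSq_ofReal]; ring
    have e3 : (deriv v y * (starRingEnd ℂ) ((s : ℂ) * ((f y : ℂ) * v y))).re
        = s * (f y * (deriv v y * (starRingEnd ℂ) (v y)).re) := by
      rw [map_mul, map_mul, Complex.conj_ofReal, Complex.conj_ofReal]
      have : deriv v y * ((s : ℂ) * ((f y : ℂ) * (starRingEnd ℂ) (v y)))
          = (s : ℂ) * ((f y : ℂ) * (deriv v y * (starRingEnd ℂ) (v y))) := by ring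
      rw [this, Complex.re_ofReal_mul, Complex.re_ofReal_mul]
    rw [e2, e3]; ring
  -- positivity
  have pos : ∀ s : ℝ, 0 ≤ K + s ^ 2 * Fq + 2 * s * J := by
    intro s
    have h0 : 0 ≤ ∫ y, ‖deriv v y + (s : ℂ) * ((f y : ℂ) * v y)‖ ^ 2 :=
      integral_nonneg fun y => by positivity
    have e : ∫ y, ‖deriv v y + (s : ℂ) * ((f y : ℂ) * v y)‖ ^ 2
        = ∫ y, (‖deriv v y‖ ^ 2 + s ^ 2 * (f y ^ 2 * ‖v y‖ ^ 2)
          + 2 * s * (f y * (deriv v y * (starRingEnd ℂ) (v y)).re)) :=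
      integral_congr_ae (Eventually.of_forall fun y => hpt s y)
    have iFs : Integrable (fun y => s ^ 2 * (f y ^ 2 * ‖v y‖ ^ 2)) := iF.const_mul _
    have iC : Integrable (fun y => ‖deriv v y‖ ^ 2 + s ^ 2 * (f y ^ 2 * ‖v y‖ ^ 2)) :=
      iK.add iFs
    have iJs : Integrable
        (fun y => 2 * s * (f y * (deriv v y * (starRingEnd ℂ) (v y)).re)) := iJ.const_mul _
    rw [e, integral_add iC iJs, integral_add iK iFs, integral_const_mul,
      integral_const_mul] at h0
    exact h0
  -- N > 0
  have hNpos : 0 < N := by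
    rw [hN]
    refine (integral_pos_iff_support_of_nonneg (fun y => by positivity) iN).mpr ?_
    obtain ⟨y0, hy0⟩ := hv0
    have hopen : IsOpen {y : ℝ | v y ≠ 0} :=
      (isClosed_eq hvc continuous_const).isOpen_compl
    refine lt_of_lt_of_le (hopen.measure_pos volume ⟨y0, hy0⟩) (measure_mono ?_)
    intro y hy
    simp only [Function.mem_support]
    exact pow_ne_zero 2 (norm_ne_zero_iff.mpr hy)
  -- |I| ≤ M N
  have hIle : |I| ≤ M * N := by
    rw [hI, hN, ← integral_const_mul]
    calc |∫ y, deriv f y * ‖v y‖ ^ 2|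
        = ‖∫ y, deriv f y * ‖v y‖ ^ 2‖ := (Real.norm_eq_abs _).symm
      _ ≤ ∫ y, ‖deriv f y * ‖v y‖ ^ 2‖ := norm_integral_le_integral_norm _
      _ ≤ ∫ y, M * ‖v y‖ ^ 2 := by
          refine integral_mono iI.norm (iN.const_mul M) ?_
          intro y
          show ‖deriv f y * ‖v y‖ ^ 2‖ ≤ M * ‖v y‖ ^ 2
          rw [Real.norm_eq_abs, abs_mul, abs_of_nonneg (pow_nonneg (norm_nonneg (v y)) 2)]
          exact mul_le_mul_of_nonneg_right (hM y) (pow_nonneg (norm_nonneg (v y)) 2)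
  -- combine
  have habs : |I| ≤ K + Fq := by
    have p1 := pos 1
    have p2 := pos (-1)
    rw [abs_le]
    constructor <;> nlinarith [key2]
  have main : (ξ ^ 2 - E ^ 2) * N ≤ -((ξ / E) * I) - |I| := by linarith [key1, habs]
  have step : ∀ ε : ℝ, ε * I ≤ |I| → ξ ^ 2 - E ^ 2 ≤ |ξ / E + ε| * M := by
    intro ε h1
    have h3 : -((ξ / E) * I) - ε * I ≤ |ξ / E + ε| * |I| := by
      have e : -((ξ / E) * I) - ε * I = -(ξ / E + ε) * I := by ring
      rw [e]
      exact (le_abs_self _).trans (le_of_eq (by rw [abs_mul, abs_neg]))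
    have h4 : |ξ / E + ε| * |I| ≤ |ξ / E + ε| * (M * N) :=
      mul_le_mul_of_nonneg_left hIle (abs_nonneg _)
    have h2 : (ξ ^ 2 - E ^ 2) * N ≤ (|ξ / E + ε| * M) * N := by
      rw [mul_assoc]
      linarith [main, h1, h3, h4]
    exact le_of_mul_le_mul_right h2 hNpos
  have hfac : ξ ^ 2 - E ^ 2 = |ξ - E| * |ξ + E| := by
    rw [← abs_mul]
    have e : (ξ - E) * (ξ + E) = ξ ^ 2 - E ^ 2 := by ring
    rw [e, abs_of_pos (by linarith)]
  have hE' : E ≠ 0 := ne_of_gt hE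
  constructor
  · have h := step 1 (by simpa using le_abs_self I)
    have habs1 : E * |ξ / E + 1| = |ξ + E| := by
      have e : ξ + E = E * (ξ / E + 1) := by field_simp
      rw [e, abs_mul, abs_of_pos hE]
    have hpE : 0 < |ξ + E| := by
      rw [abs_pos]
      intro hc
      nlinarith
    have h2 : E * (ξ ^ 2 - E ^ 2) ≤ E * (|ξ / E + 1| * M) :=
      mul_le_mul_of_nonneg_left h hE.le
    have h3 : E * (|ξ / E + 1| * M) = |ξ + E| * M := by rw [← mul_assoc, habs1]
    rw [hfac, h3] at h2
    nlinarith [h2, hpE]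
  · have h := step (-1) (by simp only [neg_one_mul]; linarith [neg_abs_le I])
    have habs1 : E * |ξ / E + -1| = |ξ - E| := by
      have e : ξ - E = E * (ξ / E + -1) := by field_simp; ring
      rw [e, abs_mul, abs_of_pos hE]
    have hmE : 0 < |ξ - E| := by
      rw [abs_pos]
      intro hc
      nlinarith
    have h2 : E * (ξ ^ 2 - E ^ 2) ≤ E * (|ξ / E + -1| * M) :=
      mul_le_mul_of_nonneg_left h hE.le
    have h3 : E * (|ξ / E + -1| * M) = |ξ - E| * M := by rw [← mul_assoc, habs1]
    rw [hfac, h3] at h2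
    nlinarith [h2, hmE]
end

section
/- Let f : ℝ → ℝ be continuously differentiable, let E > 0, ξ ∈ ℝ, μ := ξ/E, and let v : ℝ → ℂ be twice continuously differentiable with v, v', f·v ∈ L²(ℝ), v'(y)·conj(v(y)) → 0 and f(y)·|v(y)|² → 0 as |y| → ∞, satisfying −v''(y) + (f(y)² + μ·f'(y))·v(y) = (E² − ξ²)·v(y) for all y ∈ ℝ. (a) If f'(y) > 0 for all y and ξ > E (the sector 0 < E < ξ), then v ≡ 0. (b) If f'(y) < 0 for all y and −ξ > E (the sector 0 < E < −ξ), then v ≡ 0. In other words, for strictly increasing f no spectral branch exists in the sector ξ > E > 0, and for strictly decreasing f none exists in the sector −ξ > E > 0. -/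
open MeasureTheory Filter

lemma no_branch_aux (f : ℝ → ℝ) (E ξ : ℝ)
    (v : ℝ → ℂ) (hv : ContDiff ℝ 2 v)
    (hode : ∀ y : ℝ, -(deriv (deriv v) y)
        + (((f y) ^ 2 + (ξ / E) * deriv f y : ℝ) : ℂ) * v y
      = (((E ^ 2 - ξ ^ 2 : ℝ)) : ℂ) * v y)
    (hbc1 : Tendsto (fun y => deriv v y * (starRingEnd ℂ) (v y)) atTop (nhds 0))
    (hbc2 : Tendsto (fun y => deriv v y * (starRingEnd ℂ) (v y)) atBot (nhds 0))
    (hW : ∀ y, 0 < f y ^ 2 + (ξ / E) * deriv f y + ξ ^ 2 - E ^ 2) :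
    ∀ y : ℝ, v y = 0 := by
  have hv1 : Differentiable ℝ v := hv.differentiable (by norm_num)
  have hvd : ContDiff ℝ 1 (deriv v) := by
    have := (contDiff_succ_iff_deriv (n := 1)).mp (by exact_mod_cast hv)
    exact this.2.2
  have hv2d : Differentiable ℝ (deriv v) := hvd.differentiable (by norm_num)
  set W : ℝ → ℝ := fun y => f y ^ 2 + (ξ / E) * deriv f y + ξ ^ 2 - E ^ 2 with hWdef
  have hvpp : ∀ y, deriv (deriv v) y = ((W y : ℝ) : ℂ) * v y := by
    intro y
    have h0 := hode y
    simp only [hWdef]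
    push_cast at h0 ⊢
    linear_combination -h0
  have hder : ∀ y, HasDerivAt v (deriv v y) y := fun y => (hv1 y).hasDerivAt
  have hder2 : ∀ y, HasDerivAt (deriv v) (deriv (deriv v) y) y := fun y => (hv2d y).hasDerivAt
  set h : ℝ → ℝ := fun y => 2 * (deriv v y * (starRingEnd ℂ) (v y)).re with hh
  have hh' : ∀ y, HasDerivAt h
      (2 * (W y * Complex.normSq (v y) + Complex.normSq (deriv v y))) y := by
    intro y
    have hF : HasDerivAt (fun y => deriv v y * (starRingEnd ℂ) (v y))
        (deriv (deriv v) y * (starRingEnd ℂ) (v y)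
          + deriv v y * (starRingEnd ℂ) (deriv v y)) y := by
      exact (hder2 y).mul ((hder y).star)
    have h2 := ((Complex.reCLM.hasFDerivAt.comp_hasDerivAt y hF)).const_mul (2 : ℝ)
    refine h2.congr_deriv ?_
    symm
    simp only [Complex.reCLM_apply]
    rw [hvpp y, mul_assoc, Complex.mul_conj, Complex.mul_conj, ← Complex.ofReal_mul,
      ← Complex.ofReal_add, Complex.ofReal_re]
  have hmono : Monotone h := by
    apply monotone_of_deriv_nonneg (fun y => (hh' y).differentiableAt)
    intro y
    rw [(hh' y).deriv]
    have hWy : (0:ℝ) < W y := hW y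
    nlinarith [mul_nonneg hWy.le (Complex.normSq_nonneg (v y)),
      Complex.normSq_nonneg (deriv v y)]
  have hre : Tendsto (fun z : ℂ => 2 * z.re) (nhds 0) (nhds 0) := by
    simpa using ((Complex.continuous_re.tendsto (0 : ℂ)).const_mul (2 : ℝ))
  have htop : Tendsto h atTop (nhds 0) := hre.comp hbc1
  have hbot : Tendsto h atBot (nhds 0) := hre.comp hbc2
  have hz : h = fun _ => (0 : ℝ) :=
    funext fun y => le_antisymm (hmono.ge_of_tendsto htop y) (hmono.le_of_tendsto hbot y)
  intro y
  have hdz : deriv h y = 0 := by rw [hz]; simp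
  have hd := (hh' y).deriv
  rw [hdz] at hd
  have hW' := hW y
  have h1 := Complex.normSq_nonneg (v y)
  have h2 := Complex.normSq_nonneg (deriv v y)
  have hns : Complex.normSq (v y) = 0 := by
    have hWy : (0:ℝ) < W y := hW y
    nlinarith
  exact Complex.normSq_eq_zero.mp hns

/-- **No branches in forbidden sectors for monotone profiles.** Let `f` be
`C¹`, `E > 0`, `μ = ξ/E`, and let `v` be a `C²` solution of
`-v'' + (f² + μ f') v = (E² - ξ²) v` with `v, v', f·v ∈ L²` and vanishing
boundary terms. (a) If `f' > 0` everywhere and `ξ > E`, then `v ≡ 0`.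
(b) If `f' < 0` everywhere and `-ξ > E`, then `v ≡ 0`. -/
theorem no_branch_monotone_sectors
    (f : ℝ → ℝ) (hf : ContDiff ℝ 1 f)
    (E ξ : ℝ) (hE : 0 < E)
    (v : ℝ → ℂ) (hv : ContDiff ℝ 2 v)
    (hode : ∀ y : ℝ, -(deriv (deriv v) y)
        + (((f y) ^ 2 + (ξ / E) * deriv f y : ℝ) : ℂ) * v y
      = (((E ^ 2 - ξ ^ 2 : ℝ)) : ℂ) * v y)
    (hv2 : MemLp v 2 volume) (hdv2 : MemLp (deriv v) 2 volume)
    (hfv2 : MemLp (fun y => (f y : ℂ) * v y) 2 volume)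
    (hbc1 : Tendsto (fun y => deriv v y * (starRingEnd ℂ) (v y)) atTop (nhds 0))
    (hbc2 : Tendsto (fun y => deriv v y * (starRingEnd ℂ) (v y)) atBot (nhds 0))
    (hbc3 : Tendsto (fun y => f y * ‖v y‖ ^ 2) atTop (nhds 0))
    (hbc4 : Tendsto (fun y => f y * ‖v y‖ ^ 2) atBot (nhds 0)) :
    ((∀ y : ℝ, 0 < deriv f y) → E < ξ → ∀ y : ℝ, v y = 0) ∧
    ((∀ y : ℝ, deriv f y < 0) → E < -ξ → ∀ y : ℝ, v y = 0) := by
  constructor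
  · intro hf' hEξ
    apply no_branch_aux f E ξ v hv hode hbc1 hbc2
    intro y
    have h1 := hf' y
    have h2 : 0 < ξ / E := div_pos (lt_trans hE hEξ) hE
    nlinarith [sq_nonneg (f y), mul_pos h2 h1]
  · intro hf' hEξ
    apply no_branch_aux f E ξ v hv hode hbc1 hbc2
    intro y
    have h1 := hf' y
    have h2 : ξ / E < 0 := div_neg_of_neg_of_pos (by linarith) hE
    nlinarith [sq_nonneg (f y), mul_pos_of_neg_of_neg h2 h1]
end

section
/- Let f₊, f₋ ∈ ℝ with f₊ ≠ f₋, and set f_o := (f₊ − f₋)/2, f_e := (f₊ + f₋)/2. Let ξ ∈ ℝ and E ∈ ℝ satisfy 0 < E < |ξ|, and set κ_± := √(f_±² + ξ² − E²) (both are positive real numbers since ξ² > E²). If κ₊ + κ₋ + (ξ/E)·(f₊ − f₋) = 0, then necessarily ξ·f_o < 0 and E = −ξ·f_o/√(f_e² + ξ²). In other words, the dispersion relation for an interface mode at a single jump of the Coriolis profile has a unique solution in the sector 0 < E < |ξ|. -/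
/-- **Uniqueness of the interface dispersion relation.** For a single Coriolis
jump `f₊ ≠ f₋` with half-jump `f_o` and mean `f_e`, if `0 < E < |ξ|` and the
decay rates `κ± = √(f±² + ξ² - E²)` satisfy the matching condition
`κ₊ + κ₋ + (ξ/E)(f₊ - f₋) = 0`, then necessarily `ξ f_o < 0` and
`E = -ξ f_o / √(f_e² + ξ²)`. -/
theorem single_jump_dispersion_unique
    (fp fm : ℝ) (hne : fp ≠ fm)
    (fo fe : ℝ) (hfo : fo = (fp - fm) / 2) (hfe : fe = (fp + fm) / 2)
    (ξ E : ℝ) (hE : 0 < E) (hEξ : E < |ξ|)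
    (κp κm : ℝ)
    (hκp : κp = Real.sqrt (fp ^ 2 + ξ ^ 2 - E ^ 2))
    (hκm : κm = Real.sqrt (fm ^ 2 + ξ ^ 2 - E ^ 2))
    (hmatch : κp + κm + (ξ / E) * (fp - fm) = 0) :
    ξ * fo < 0 ∧ E = -ξ * fo / Real.sqrt (fe ^ 2 + ξ ^ 2) := by
  have hE0 : E ≠ 0 := ne_of_gt hE
  have hs : E ^ 2 < ξ ^ 2 := by
    have h1 : E ^ 2 < |ξ| ^ 2 := by
      apply pow_lt_pow_left₀ hEξ (le_of_lt hE)
      norm_num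
    rwa [sq_abs] at h1
  have hξ0 : ξ ≠ 0 := by
    intro h
    rw [h] at hs
    nlinarith
  have hfo0 : fo ≠ 0 := by
    rw [hfo]
    intro h
    apply hne
    have : fp - fm = 0 := by linarith [h]
    linarith
  -- positivity of κ's
  have hκpa : (0:ℝ) < fp ^ 2 + ξ ^ 2 - E ^ 2 := by nlinarith [sq_nonneg fp]
  have hκma : (0:ℝ) < fm ^ 2 + ξ ^ 2 - E ^ 2 := by nlinarith [sq_nonneg fm]
  have hκp_pos : 0 < κp := by rw [hκp]; exact Real.sqrt_pos.mpr hκpa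
  have hκm_pos : 0 < κm := by rw [hκm]; exact Real.sqrt_pos.mpr hκma
  have hκp2 : κp ^ 2 = fp ^ 2 + ξ ^ 2 - E ^ 2 := by
    rw [hκp, Real.sq_sqrt (le_of_lt hκpa)]
  have hκm2 : κm ^ 2 = fm ^ 2 + ξ ^ 2 - E ^ 2 := by
    rw [hκm, Real.sq_sqrt (le_of_lt hκma)]
  -- matching condition multiplied by E
  have hmE : E * (κp + κm) + ξ * (2 * fo) = 0 := by
    have h := congrArg (· * E) hmatch
    simp only [zero_mul] at h
    field_simp at h
    rw [hfo]
    field_simp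
    linarith
  -- sign condition
  have hsgn : ξ * fo < 0 := by nlinarith [mul_pos hE (add_pos hκp_pos hκm_pos)]
  refine ⟨hsgn, ?_⟩
  -- first squaring
  have hsq1 : (E * (κp + κm)) ^ 2 = (2 * (ξ * fo)) ^ 2 := by
    have : E * (κp + κm) = -(2 * (ξ * fo)) := by linarith
    rw [this]; ring
  have hA : 2 * E ^ 2 * (κp * κm) = 4 * ξ ^ 2 * fo ^ 2 - E ^ 2 * (κp ^ 2 + κm ^ 2) := by
    linear_combination hsq1
  -- second squaring
  have hB : 4 * E ^ 4 * (κp ^ 2 * κm ^ 2)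
      = (4 * ξ ^ 2 * fo ^ 2 - E ^ 2 * (κp ^ 2 + κm ^ 2)) ^ 2 := by
    linear_combination (2 * E ^ 2 * (κp * κm)
      + (4 * ξ ^ 2 * fo ^ 2 - E ^ 2 * (κp ^ 2 + κm ^ 2))) * hA
  rw [hκp2, hκm2] at hB
  -- express fp, fm via fe, fo
  have hfp : fp = fe + fo := by rw [hfo, hfe]; ring
  have hfm : fm = fe - fo := by rw [hfo, hfe]; ring
  rw [hfp, hfm] at hB
  -- factor out
  have hfac : 16 * fo ^ 2 * ((ξ ^ 2 - E ^ 2) * (E ^ 2 * (fe ^ 2 + ξ ^ 2) - ξ ^ 2 * fo ^ 2)) = 0 := by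
    linear_combination hB
  have hkey : E ^ 2 * (fe ^ 2 + ξ ^ 2) = ξ ^ 2 * fo ^ 2 := by
    have h1 : (ξ ^ 2 - E ^ 2) * (E ^ 2 * (fe ^ 2 + ξ ^ 2) - ξ ^ 2 * fo ^ 2) = 0 := by
      have h16 : (16 : ℝ) * fo ^ 2 ≠ 0 := by positivity
      have := mul_eq_zero.mp hfac
      rcases this with h | h
      · exact absurd h (by positivity)
      · exact h
    have h2 : ξ ^ 2 - E ^ 2 ≠ 0 := ne_of_gt (by linarith)
    have := mul_eq_zero.mp h1
    rcases this with h | h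
    · exact absurd h h2
    · linarith
  clear hB hfac hmatch hmE hsq1 hA hκp2 hκm2 hκp hκm
  -- conclude
  have hroot_pos : (0:ℝ) < fe ^ 2 + ξ ^ 2 := by positivity
  have hsqrt_pos : 0 < Real.sqrt (fe ^ 2 + ξ ^ 2) := Real.sqrt_pos.mpr hroot_pos
  have hEq : (E * Real.sqrt (fe ^ 2 + ξ ^ 2)) ^ 2 = (-(ξ * fo)) ^ 2 := by
    rw [mul_pow, Real.sq_sqrt (le_of_lt hroot_pos)]
    linear_combination hkey
  have hEq2 : E * Real.sqrt (fe ^ 2 + ξ ^ 2) = -(ξ * fo) := by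
    have h1 : 0 ≤ E * Real.sqrt (fe ^ 2 + ξ ^ 2) := by positivity
    have h2 : 0 ≤ -(ξ * fo) := by linarith
    have habs : |E * Real.sqrt (fe ^ 2 + ξ ^ 2)| = |(-(ξ * fo))| := by
      rw [← Real.sqrt_sq_eq_abs, ← Real.sqrt_sq_eq_abs, hEq]
    rwa [abs_of_nonneg h1, abs_of_nonneg h2] at habs
  field_simp
  linarith [hEq2]
end

section
/- Let y₀ ∈ ℝ, f₊, f₋ ∈ ℝ with f_o := (f₊−f₋)/2 ≠ 0, f_e := (f₊+f₋)/2, and ξ ∈ ℝ with ξ·f_o < 0 and f_o² < f_e² + ξ². Define f(y) = f₊ for y > y₀ and f(y) = f₋ for y ≤ y₀; E := −ξ·f_o/√(f_e²+ξ²); κ_± := √(f_±² + ξ² − E²); v(y) := e^{−κ₊(y−y₀)} for y ≥ y₀ and v(y) := e^{κ₋(y−y₀)} for y ≤ y₀; η(y) := i·(E·κ₊ + ξ·f₊)/(E²−ξ²)·v(y) for y ≥ y₀ and η(y) := i·(−E·κ₋ + ξ·f₋)/(E²−ξ²)·v(y) for y ≤ y₀; u(y) := i·(ξ·κ₊ +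 E·f₊)/(E²−ξ²)·v(y) for y > y₀ and u(y) := i·(−ξ·κ₋ + E·f₋)/(E²−ξ²)·v(y) for y < y₀. Then: (i) 0 < E < |ξ|; (ii) the two formulas for η agree at y₀, so η and v are continuous on ℝ; (iii) η, u, v are square-integrable; (iv) the fibered shallow-water system with profile f, wavenumber ξ and frequency E holds at every y ≠ y₀; (v) the jump conditions hold: i·(f₊−f₋)·v(y₀) = E·(u(y₀⁺) − u(y₀⁻)), ξ·(f₊−f₋)·v(y₀) = E·(v'(y₀⁺) − v'(y₀⁻)), and η'(y₀⁺) − η'(y₀⁻) = −(f₊·u(y₀⁺) − f₋·u(y₀⁻)). -/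
open MeasureTheory Filter

lemma integrableOn_exp_shift_Ici (a b : ℝ) (hb : 0 < b) :
    IntegrableOn (fun y => Real.exp (-b * (y - a))) (Set.Ici a) := by
  rw [integrableOn_Ici_iff_integrableOn_Ioi]
  have h := (exp_neg_integrableOn_Ioi a hb).const_mul (Real.exp (b * a))
  refine IntegrableOn.congr_fun h (fun y _ => ?_) measurableSet_Ioi
  rw [← Real.exp_add]; ring_nf

lemma integrableOn_exp_shift_Iic (a b : ℝ) (hb : 0 < b) :
    IntegrableOn (fun y => Real.exp (b * (y - a))) (Set.Iic a) := by
  have h1 : IntegrableOn (fun x => Real.exp (-b * (x - (-a)))) (Set.Ici (-a)) :=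
    integrableOn_exp_shift_Ici (-a) b hb
  have h2 : Integrable ((Set.Ici (-a)).indicator fun x => Real.exp (-b * (x - (-a)))) :=
    (integrable_indicator_iff measurableSet_Ici).2 h1
  have h3 := h2.comp_neg
  have h4 : (fun x => (Set.Ici (-a)).indicator (fun x => Real.exp (-b * (x - (-a)))) (-x))
      = (Set.Iic a).indicator fun y => Real.exp (b * (y - a)) := by
    funext x
    by_cases hx : x ≤ a
    · rw [Set.indicator_of_mem (by simpa using hx), Set.indicator_of_mem (by simpa using hx)]
      ring_nf
    · rw [Set.indicator_of_notMem (by simpa using hx),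
        Set.indicator_of_notMem (by simpa using hx)]
  rw [h4] at h3
  exact (integrable_indicator_iff measurableSet_Iic).1 h3

set_option maxHeartbeats 4000000 in
/-- **The single-jump interface eigenmode (Lemma on the local jump problem).**
For a piecewise-constant Coriolis profile `f = f₊` for `y > y₀`, `f = f₋` for
`y ≤ y₀`, with half-jump `f_o ≠ 0`, mean `f_e`, wavenumber `ξ` such that
`ξ f_o < 0` and `f_o² < f_e² + ξ²`, and with
`E = -ξ f_o / √(f_e² + ξ²)`, `κ± = √(f±² + ξ² - E²)`, the explicitly defined
triple `(η, u, v)` is a genuine interface eigenmode: (i) `0 < E < |ξ|`;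
(ii) the two formulas for `η` agree at `y₀`, so `η` and `v` are continuous;
(iii) `η, u, v ∈ L²`; (iv) the fibered shallow-water system holds at every
`y ≠ y₀`; (v) the jump conditions hold at `y₀`. -/
theorem single_jump_eigenmode
    (y₀ : ℝ) (fp fm fo fe : ℝ)
    (hfo : fo = (fp - fm) / 2) (hfe : fe = (fp + fm) / 2) (hfo0 : fo ≠ 0)
    (ξ : ℝ) (hsign : ξ * fo < 0) (hlt : fo ^ 2 < fe ^ 2 + ξ ^ 2)
    (f : ℝ → ℝ) (hf : ∀ y : ℝ, f y = if y₀ < y then fp else fm)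
    (E : ℝ) (hE : E = -ξ * fo / Real.sqrt (fe ^ 2 + ξ ^ 2))
    (κp κm : ℝ)
    (hκp : κp = Real.sqrt (fp ^ 2 + ξ ^ 2 - E ^ 2))
    (hκm : κm = Real.sqrt (fm ^ 2 + ξ ^ 2 - E ^ 2))
    (v η u : ℝ → ℂ)
    (hv : ∀ y : ℝ, v y = if y₀ ≤ y then (Real.exp (-κp * (y - y₀)) : ℂ)
      else (Real.exp (κm * (y - y₀)) : ℂ))
    (hη : ∀ y : ℝ, η y =
      (if y₀ ≤ y then Complex.I * ((E : ℂ) * (κp : ℂ) + (ξ : ℂ) * (fp : ℂ))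
            / ((E : ℂ) ^ 2 - (ξ : ℂ) ^ 2)
        else Complex.I * (-(E : ℂ) * (κm : ℂ) + (ξ : ℂ) * (fm : ℂ))
            / ((E : ℂ) ^ 2 - (ξ : ℂ) ^ 2)) * v y)
    (hu : ∀ y : ℝ, u y =
      (if y₀ < y then Complex.I * ((ξ : ℂ) * (κp : ℂ) + (E : ℂ) * (fp : ℂ))
            / ((E : ℂ) ^ 2 - (ξ : ℂ) ^ 2)
        else Complex.I * (-(ξ : ℂ) * (κm : ℂ) + (E : ℂ) * (fm : ℂ))
            / ((E : ℂ) ^ 2 - (ξ : ℂ) ^ 2)) * v y) :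
    (0 < E ∧ E < |ξ|) ∧
    (Complex.I * ((E : ℂ) * (κp : ℂ) + (ξ : ℂ) * (fp : ℂ)) / ((E : ℂ) ^ 2 - (ξ : ℂ) ^ 2)
        = Complex.I * (-(E : ℂ) * (κm : ℂ) + (ξ : ℂ) * (fm : ℂ)) / ((E : ℂ) ^ 2 - (ξ : ℂ) ^ 2) ∧
      Continuous η ∧ Continuous v) ∧
    (MemLp η 2 volume ∧ MemLp u 2 volume ∧ MemLp v 2 volume) ∧
    (∀ y : ℝ, y ≠ y₀ →
      ((ξ : ℂ) * u y - Complex.I * deriv v y = (E : ℂ) * η y ∧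
       (ξ : ℂ) * η y + Complex.I * (f y : ℂ) * v y = (E : ℂ) * u y ∧
       -Complex.I * deriv η y - Complex.I * (f y : ℂ) * u y = (E : ℂ) * v y)) ∧
    (∃ up um vp vm ep em : ℂ,
      Tendsto u (nhdsWithin y₀ (Set.Ioi y₀)) (nhds up) ∧
      Tendsto u (nhdsWithin y₀ (Set.Iio y₀)) (nhds um) ∧
      Tendsto (deriv v) (nhdsWithin y₀ (Set.Ioi y₀)) (nhds vp) ∧
      Tendsto (deriv v) (nhdsWithin y₀ (Set.Iio y₀)) (nhds vm) ∧
      Tendsto (deriv η) (nhdsWithin y₀ (Set.Ioi y₀)) (nhds ep) ∧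
      Tendsto (deriv η) (nhdsWithin y₀ (Set.Iio y₀)) (nhds em) ∧
      Complex.I * ((fp : ℂ) - (fm : ℂ)) * v y₀ = (E : ℂ) * (up - um) ∧
      (ξ : ℂ) * ((fp : ℂ) - (fm : ℂ)) * v y₀ = (E : ℂ) * (vp - vm) ∧
      ep - em = -((fp : ℂ) * up - (fm : ℂ) * um)) := by
  -- ## Real algebra
  have hξ0 : ξ ≠ 0 := by rintro rfl; simp at hsign
  have hξ2 : 0 < ξ ^ 2 := lt_of_le_of_ne (sq_nonneg ξ) (Ne.symm (pow_ne_zero 2 hξ0))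
  have hS0 : 0 < fe ^ 2 + ξ ^ 2 := by nlinarith [sq_nonneg fe]
  set s := Real.sqrt (fe ^ 2 + ξ ^ 2) with hsdef
  have hs0 : 0 < s := Real.sqrt_pos.2 hS0
  have hs2 : s ^ 2 = fe ^ 2 + ξ ^ 2 := Real.sq_sqrt hS0.le
  have hEs : E * s = -ξ * fo := by rw [hE]; field_simp
  have hE0 : 0 < E := by
    rw [hE]; apply div_pos (by nlinarith) hs0
  have hE2 : E ^ 2 * (fe ^ 2 + ξ ^ 2) = ξ ^ 2 * fo ^ 2 := by
    linear_combination (-E ^ 2) * hs2 + (E * s - ξ * fo) * hEs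
  have hE2lt : E ^ 2 < ξ ^ 2 := by
    nlinarith [mul_lt_mul_of_pos_left hlt hξ2, hE2, hS0]
  have hD0 : E ^ 2 - ξ ^ 2 ≠ 0 := ne_of_lt (by linarith)
  have hEξ : E < |ξ| := lt_of_pow_lt_pow_left₀ 2 (abs_nonneg ξ) (by rwa [sq_abs])
  have hfp : fp = fe + fo := by rw [hfo, hfe]; ring
  have hfm : fm = fe - fo := by rw [hfo, hfe]; ring
  have hposp : 0 < fp ^ 2 + ξ ^ 2 - E ^ 2 := by nlinarith [sq_nonneg fp]
  have hposm : 0 < fm ^ 2 + ξ ^ 2 - E ^ 2 := by nlinarith [sq_nonneg fm]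
  have hκp0 : 0 < κp := hκp ▸ Real.sqrt_pos.2 hposp
  have hκm0 : 0 < κm := hκm ▸ Real.sqrt_pos.2 hposm
  have hκp2 : κp ^ 2 = fp ^ 2 + ξ ^ 2 - E ^ 2 := by rw [hκp]; exact Real.sq_sqrt hposp.le
  have hκm2 : κm ^ 2 = fm ^ 2 + ξ ^ 2 - E ^ 2 := by rw [hκm]; exact Real.sq_sqrt hposm.le
  have hargp : (s + fe * fo / s) ^ 2 = fp ^ 2 + ξ ^ 2 - E ^ 2 := by
    rw [hfp]; field_simp
    linear_combination (E ^ 2 + s ^ 2 - fo ^ 2) * hs2 + hE2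
  have hargm : (s - fe * fo / s) ^ 2 = fm ^ 2 + ξ ^ 2 - E ^ 2 := by
    rw [hfm]; field_simp
    linear_combination (E ^ 2 + s ^ 2 - fo ^ 2) * hs2 + hE2
  have hposp' : 0 ≤ s + fe * fo / s := by
    rw [show s + fe * fo / s = (s ^ 2 + fe * fo) / s by field_simp [hs0.ne']]
    apply div_nonneg _ hs0.le
    nlinarith [sq_nonneg (fe + fo), hs2]
  have hposm' : 0 ≤ s - fe * fo / s := by
    rw [show s - fe * fo / s = (s ^ 2 - fe * fo) / s by field_simp [hs0.ne']]
    apply div_nonneg _ hs0.le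
    nlinarith [sq_nonneg (fe - fo), hs2]
  have hκpv : κp = s + fe * fo / s := by rw [hκp, ← hargp, Real.sqrt_sq hposp']
  have hκmv : κm = s - fe * fo / s := by rw [hκm, ← hargm, Real.sqrt_sq hposm']
  have hsum : κp + κm = 2 * s := by rw [hκpv, hκmv]; ring
  have r1 : E * κp + ξ * fp = -E * κm + ξ * fm := by
    linear_combination E * hsum + 2 * hEs - 2 * ξ * hfo
  have r5 : (fp - fm) * (E ^ 2 - ξ ^ 2) = E * ((ξ * κp + E * fp) - (-ξ * κm + E * fm)) := by
    linear_combination (-(E * ξ)) * hsum + (-(2 * ξ)) * hEs + (2 * ξ ^ 2) * hfo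
  have r6 : ξ * (fp - fm) = E * (-κp - κm) := by
    linear_combination E * hsum + 2 * hEs + (-(2 * ξ)) * hfo
  have r7 : κp * (E * κp + ξ * fp) + κm * (-E * κm + ξ * fm)
      = fp * (ξ * κp + E * fp) - fm * (-ξ * κm + E * fm) := by
    linear_combination E * hκp2 - E * hκm2
  -- ## Complex algebra
  have hDC : ((E:ℂ) ^ 2 - (ξ:ℂ) ^ 2) ≠ 0 := by
    have h : ((E:ℂ) ^ 2 - (ξ:ℂ) ^ 2) = ((E ^ 2 - ξ ^ 2 : ℝ) : ℂ) := by push_cast; ring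
    rw [h]; exact Complex.ofReal_ne_zero.2 hD0
  have hκp2C : (κp:ℂ) ^ 2 = (fp:ℂ) ^ 2 + (ξ:ℂ) ^ 2 - (E:ℂ) ^ 2 := by exact_mod_cast hκp2
  have hκm2C : (κm:ℂ) ^ 2 = (fm:ℂ) ^ 2 + (ξ:ℂ) ^ 2 - (E:ℂ) ^ 2 := by exact_mod_cast hκm2
  have r1C : (E:ℂ) * κp + ξ * fp = -(E:ℂ) * κm + ξ * fm := by exact_mod_cast r1
  have r5C : ((fp:ℂ) - fm) * ((E:ℂ) ^ 2 - (ξ:ℂ) ^ 2)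
      = (E:ℂ) * (((ξ:ℂ) * κp + E * fp) - (-(ξ:ℂ) * κm + E * fm)) := by exact_mod_cast r5
  have r6C : (ξ:ℂ) * ((fp:ℂ) - fm) = (E:ℂ) * (-(κp:ℂ) - κm) := by exact_mod_cast r6
  have r7C : (κp:ℂ) * ((E:ℂ) * κp + ξ * fp) + (κm:ℂ) * (-(E:ℂ) * κm + ξ * fm)
      = (fp:ℂ) * ((ξ:ℂ) * κp + E * fp) - (fm:ℂ) * (-(ξ:ℂ) * κm + E * fm) := by exact_mod_cast r7
  have hI2 : Complex.I ^ 2 = -1 := Complex.I_sq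
  have hI4 : Complex.I ^ 4 = 1 := by rw [show (4:ℕ) = 2*2 from rfl, pow_mul, hI2]; norm_num
  set D : ℂ := (E:ℂ) ^ 2 - (ξ:ℂ) ^ 2 with hD
  set cp : ℂ := Complex.I * ((E:ℂ) * κp + ξ * fp) / D with hcp
  set cm : ℂ := Complex.I * (-(E:ℂ) * κm + ξ * fm) / D with hcm
  set dp : ℂ := Complex.I * ((ξ:ℂ) * κp + E * fp) / D with hdp
  set dm : ℂ := Complex.I * (-(ξ:ℂ) * κm + E * fm) / D with hdm
  have hAA : cp = cm := by rw [hcp, hcm, r1C]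
  have sp1 : (ξ:ℂ) * dp - Complex.I * (-(κp:ℂ)) = (E:ℂ) * cp := by
    rw [hcp, hdp]; field_simp; ring
  have sp2 : (ξ:ℂ) * cp + Complex.I * fp = (E:ℂ) * dp := by
    rw [hcp, hdp]; field_simp; ring
  have sp3 : -Complex.I * (cp * (-(κp:ℂ))) - Complex.I * fp * dp = (E:ℂ) := by
    rw [hcp, hdp]; field_simp
    linear_combination (Complex.I ^ 2 * (E:ℂ)) * hκp2C + ((E:ℂ)^3 - (E:ℂ)*(ξ:ℂ)^2 - Complex.I^2*(E:ℂ)*((fp:ℂ)^2 - (κp:ℂ)^2) + (E:ℂ)*((fp:ℂ)^2-(κp:ℂ)^2) + 2*(E:ℂ)*((ξ:ℂ)^2-(E:ℂ)^2)) * hI2 + ((E:ℂ)*((fp:ℂ)^2-(κp:ℂ)^2)) * hI4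
  have sm1 : (ξ:ℂ) * dm - Complex.I * (κm:ℂ) = (E:ℂ) * cm := by
    rw [hcm, hdm]; field_simp; ring
  have sm2 : (ξ:ℂ) * cm + Complex.I * fm = (E:ℂ) * dm := by
    rw [hcm, hdm]; field_simp; ring
  have sm3 : -Complex.I * (cm * (κm:ℂ)) - Complex.I * fm * dm = (E:ℂ) := by
    rw [hcm, hdm]; field_simp
    linear_combination (Complex.I^2*(E:ℂ))*hκm2C - ((E:ℂ)*D)*hI2
  have J1 : Complex.I * ((fp:ℂ) - fm) = (E:ℂ) * (dp - dm) := by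
    rw [hdp, hdm]; field_simp
    linear_combination r5C
  have J3 : cp * (-(κp:ℂ)) - cm * (κm:ℂ) = -((fp:ℂ) * dp - (fm:ℂ) * dm) := by
    rw [hcp, hcm, hdp, hdm]; field_simp
    linear_combination -r7C
  -- ## Continuity
  have hvc : Continuous v := by
    rw [funext hv]
    apply Continuous.if_le
    · exact Complex.continuous_ofReal.comp (Real.continuous_exp.comp (by fun_prop))
    · exact Complex.continuous_ofReal.comp (Real.continuous_exp.comp (by fun_prop))
    · exact continuous_const
    · exact continuous_id
    · intro x hx; rw [← hx]; norm_num
  have hv0 : v y₀ = 1 := by rw [hv y₀, if_pos le_rfl]; norm_num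
  have hηc : Continuous η := by
    have hconst : η = fun y => cp * v y := by
      funext y; rw [hη y]; by_cases h : y₀ ≤ y
      · rw [if_pos h]
      · rw [if_neg h, ← hAA]
    rw [hconst]; exact continuous_const.mul hvc
  -- ## Derivatives off the interface
  have hvdp : ∀ y ∈ Set.Ioi y₀, HasDerivAt v ((-κp : ℂ) * v y) y := by
    intro y hy
    have hmem : Set.Ioi y₀ ∈ nhds y := Ioi_mem_nhds hy
    have heq : ∀ z ∈ Set.Ioi y₀, v z = Complex.exp ((-(κp:ℂ)) * ((z:ℂ) - (y₀:ℂ))) := by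
      intro z hz
      rw [hv z, if_pos (le_of_lt hz), Complex.ofReal_exp]
      push_cast
      ring_nf
    have hlin : HasDerivAt (fun z : ℝ => (-(κp:ℂ)) * ((z:ℂ) - (y₀:ℂ))) (-(κp:ℂ)) y := by
      simpa using ((Complex.ofRealCLM.hasDerivAt (x := y)).sub_const (y₀:ℂ)).const_mul (-(κp:ℂ))
    have hd := hlin.cexp
    rw [show Complex.exp ((-(κp:ℂ)) * ((y:ℂ) - (y₀:ℂ))) * (-(κp:ℂ)) = (-κp : ℂ) * v y by
      rw [heq y hy]; ring] at hd
    exact hd.congr_of_eventuallyEq (eventually_of_mem hmem fun z hz => heq z hz)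
  have hvdm : ∀ y ∈ Set.Iio y₀, HasDerivAt v ((κm : ℂ) * v y) y := by
    intro y hy
    have hmem : Set.Iio y₀ ∈ nhds y := Iio_mem_nhds hy
    have heq : ∀ z ∈ Set.Iio y₀, v z = Complex.exp (((κm:ℂ)) * ((z:ℂ) - (y₀:ℂ))) := by
      intro z hz
      rw [hv z, if_neg (not_le.2 hz), Complex.ofReal_exp]
      push_cast
      ring_nf
    have hlin : HasDerivAt (fun z : ℝ => ((κm:ℂ)) * ((z:ℂ) - (y₀:ℂ))) ((κm:ℂ)) y := by
      simpa using ((Complex.ofRealCLM.hasDerivAt (x := y)).sub_const (y₀:ℂ)).const_mul ((κm:ℂ))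
    have hd := hlin.cexp
    rw [show Complex.exp (((κm:ℂ)) * ((y:ℂ) - (y₀:ℂ))) * ((κm:ℂ)) = (κm : ℂ) * v y by
      rw [heq y hy]; ring] at hd
    exact hd.congr_of_eventuallyEq (eventually_of_mem hmem fun z hz => heq z hz)
  have hηdp : ∀ y ∈ Set.Ioi y₀, HasDerivAt η (cp * ((-κp : ℂ) * v y)) y := by
    intro y hy
    refine ((hvdp y hy).const_mul cp).congr_of_eventuallyEq
      (eventually_of_mem (Ioi_mem_nhds hy) fun z hz => ?_)
    rw [hη z, if_pos (le_of_lt hz)]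
  have hηdm : ∀ y ∈ Set.Iio y₀, HasDerivAt η (cm * ((κm : ℂ) * v y)) y := by
    intro y hy
    refine ((hvdm y hy).const_mul cm).congr_of_eventuallyEq
      (eventually_of_mem (Iio_mem_nhds hy) fun z hz => ?_)
    rw [hη z, if_neg (not_le.2 hz)]
  -- ## MemLp
  have hv2 : MemLp v 2 volume := by
    rw [memLp_two_iff_integrable_sq_norm hvc.aestronglyMeasurable]
    have h1 : IntegrableOn (fun y => ‖v y‖ ^ 2) (Set.Ici y₀) := by
      refine IntegrableOn.congr_fun (integrableOn_exp_shift_Ici y₀ (2 * κp) (by positivity))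
        (fun y hy => ?_) measurableSet_Ici
      rw [hv y, if_pos (show y₀ ≤ y from hy), Complex.norm_real, Real.norm_eq_abs, Real.abs_exp, sq,
        ← Real.exp_add]
      congr 1; ring
    have h2 : IntegrableOn (fun y => ‖v y‖ ^ 2) (Set.Iic y₀) := by
      refine IntegrableOn.congr_fun (integrableOn_exp_shift_Iic y₀ (2 * κm) (by positivity))
        (fun y hy => ?_) measurableSet_Iic
      rcases eq_or_lt_of_le (show y ≤ y₀ from hy) with rfl | hlt'
      · rw [hv y, if_pos le_rfl]; simp
      · rw [hv y, if_neg (not_le.2 hlt'), Complex.norm_real, Real.norm_eq_abs, Real.abs_exp, sq,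
          ← Real.exp_add]
        congr 1; ring
    rw [← integrableOn_univ, ← Set.Iic_union_Ici (a := y₀)]
    exact h2.union h1
  have hu2 : MemLp u 2 volume := by
    have humeas : AEStronglyMeasurable u volume := by
      rw [funext hu]
      exact ((Measurable.ite measurableSet_Ioi measurable_const
        measurable_const).mul hvc.measurable).aestronglyMeasurable
    refine hv2.of_le_mul (c := max ‖dp‖ ‖dm‖) humeas (Filter.Eventually.of_forall fun y => ?_)
    rw [hu y, norm_mul]
    apply mul_le_mul_of_nonneg_right _ (norm_nonneg _)
    split_ifs
    · exact le_max_left _ _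
    · exact le_max_right _ _
  have hη2 : MemLp η 2 volume := by
    refine hv2.of_le_mul (c := max ‖cp‖ ‖cm‖) hηc.aestronglyMeasurable (Filter.Eventually.of_forall fun y => ?_)
    rw [hη y, norm_mul]
    apply mul_le_mul_of_nonneg_right _ (norm_nonneg _)
    split_ifs
    · exact le_max_left _ _
    · exact le_max_right _ _
  -- ## Assemble
  refine ⟨⟨hE0, hEξ⟩, ⟨hAA, hηc, hvc⟩, ⟨hη2, hu2, hv2⟩, ?_, ?_⟩
  · -- the ODE system away from the interface
    intro y hy
    rcases hy.lt_or_gt with h | h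
    · -- y < y₀
      have hdv : deriv v y = (κm : ℂ) * v y := (hvdm y h).deriv
      have hdη : deriv η y = cm * ((κm : ℂ) * v y) := (hηdm y h).deriv
      have hfy : ((f y : ℝ) : ℂ) = (fm : ℂ) := by rw [hf y, if_neg (not_lt.2 h.le)]
      have hηy : η y = cm * v y := by rw [hη y, if_neg (not_le.2 h)]
      have huy : u y = dm * v y := by rw [hu y, if_neg (not_lt.2 h.le)]
      refine ⟨?_, ?_, ?_⟩
      · rw [huy, hdv, hηy]; linear_combination (v y) * sm1
      · rw [hηy, huy, hfy]; linear_combination (v y) * sm2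
      · rw [hdη, huy, hfy]; linear_combination (v y) * sm3
    · -- y₀ < y
      have hdv : deriv v y = (-κp : ℂ) * v y := (hvdp y h).deriv
      have hdη : deriv η y = cp * ((-κp : ℂ) * v y) := (hηdp y h).deriv
      have hfy : ((f y : ℝ) : ℂ) = (fp : ℂ) := by rw [hf y, if_pos h]
      have hηy : η y = cp * v y := by rw [hη y, if_pos h.le]
      have huy : u y = dp * v y := by rw [hu y, if_pos h]
      refine ⟨?_, ?_, ?_⟩
      · rw [huy, hdv, hηy]; linear_combination (v y) * sp1
      · rw [hηy, huy, hfy]; linear_combination (v y) * sp2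
      · rw [hdη, huy, hfy]; linear_combination (v y) * sp3
  · -- the jump conditions
    refine ⟨dp, dm, (-κp : ℂ), (κm : ℂ), cp * (-κp : ℂ), cm * (κm : ℂ), ?_, ?_, ?_, ?_, ?_, ?_,
      ?_, ?_, ?_⟩
    · have h1 : Tendsto (fun y => dp * v y) (nhdsWithin y₀ (Set.Ioi y₀)) (nhds (dp * v y₀)) :=
        ((continuous_const.mul hvc).tendsto y₀).mono_left nhdsWithin_le_nhds
      rw [hv0, mul_one] at h1
      exact Filter.Tendsto.congr' (eventually_of_mem self_mem_nhdsWithin fun z hz =>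
        (by rw [hu z, if_pos (show y₀ < z from hz)] : u z = dp * v z).symm) h1
    · have h1 : Tendsto (fun y => dm * v y) (nhdsWithin y₀ (Set.Iio y₀)) (nhds (dm * v y₀)) :=
        ((continuous_const.mul hvc).tendsto y₀).mono_left nhdsWithin_le_nhds
      rw [hv0, mul_one] at h1
      exact Filter.Tendsto.congr' (eventually_of_mem self_mem_nhdsWithin fun z hz =>
        (by rw [hu z, if_neg (not_lt.2 (le_of_lt (show z < y₀ from hz)))] : u z = dm * v z).symm) h1
    · have h1 : Tendsto (fun y => (-κp : ℂ) * v y) (nhdsWithin y₀ (Set.Ioi y₀))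
          (nhds ((-κp : ℂ) * v y₀)) :=
        ((continuous_const.mul hvc).tendsto y₀).mono_left nhdsWithin_le_nhds
      rw [hv0, mul_one] at h1
      exact Filter.Tendsto.congr' (eventually_of_mem self_mem_nhdsWithin fun z hz =>
        ((hvdp z hz).deriv).symm) h1
    · have h1 : Tendsto (fun y => (κm : ℂ) * v y) (nhdsWithin y₀ (Set.Iio y₀))
          (nhds ((κm : ℂ) * v y₀)) :=
        ((continuous_const.mul hvc).tendsto y₀).mono_left nhdsWithin_le_nhds
      rw [hv0, mul_one] at h1
      exact Filter.Tendsto.congr' (eventually_of_mem self_mem_nhdsWithin fun z hz =>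
        ((hvdm z hz).deriv).symm) h1
    · have h1 : Tendsto (fun y => cp * ((-κp : ℂ) * v y)) (nhdsWithin y₀ (Set.Ioi y₀))
          (nhds (cp * ((-κp : ℂ) * v y₀))) :=
        ((continuous_const.mul (continuous_const.mul hvc)).tendsto y₀).mono_left
          nhdsWithin_le_nhds
      rw [hv0, mul_one] at h1
      exact Filter.Tendsto.congr' (eventually_of_mem self_mem_nhdsWithin fun z hz =>
        ((hηdp z hz).deriv).symm) h1
    · have h1 : Tendsto (fun y => cm * ((κm : ℂ) * v y)) (nhdsWithin y₀ (Set.Iio y₀))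
          (nhds (cm * ((κm : ℂ) * v y₀))) :=
        ((continuous_const.mul (continuous_const.mul hvc)).tendsto y₀).mono_left
          nhdsWithin_le_nhds
      rw [hv0, mul_one] at h1
      exact Filter.Tendsto.congr' (eventually_of_mem self_mem_nhdsWithin fun z hz =>
        ((hηdm z hz).deriv).symm) h1
    · rw [hv0, mul_one]; exact J1
    · rw [hv0, mul_one]; exact r6C
    · exact J3
end

section
/- Let f : ℝ → ℝ be continuous with f(y) → +∞ as y → +∞ and f(y) → −∞ as y → −∞, and set F(y) = ∫₀^y f(z) dz. Then: (i) e^{−F} ∈ L²(ℝ), i.e. ∫_ℝ e^{−2F(y)} dy < ∞; (ii) every differentiable u : ℝ → ℂ with u ∈ L²(ℝ) satisfying u'(y) + f(y)·u(y) = 0 for all y equals c·e^{−F} for some c ∈ ℂ; (iii) the only differentiable u ∈ L²(ℝ) satisfying −u'(y) + f(y)·u(y) = 0 for all y is u ≡ 0. Thus the operator 𝔞 = d/dy + f has a one-dimensional kernel spanned by e^{−F}, while its formal adjoint 𝔞* = −d/dy + f has trivial kernel, among square-integrable differentiable functions. -/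
open MeasureTheory Filter Set

private lemma hasDerivAt_F (f : ℝ → ℝ) (hf : Continuous f) (y : ℝ) :
    HasDerivAt (fun t => ∫ z in (0:ℝ)..t, f z) (f y) y :=
  intervalIntegral.integral_hasDerivAt_right (hf.intervalIntegrable 0 y)
    hf.aestronglyMeasurable.stronglyMeasurableAtFilter hf.continuousAt

private lemma F_grow_top (f : ℝ → ℝ) (hf : Continuous f) {a y : ℝ} (hay : a ≤ y)
    (ha : ∀ t, a ≤ t → 1 ≤ f t) :
    (∫ z in (0:ℝ)..a, f z) + (y - a) ≤ ∫ z in (0:ℝ)..y, f z := by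
  have h1 : (∫ z in (0:ℝ)..y, f z) - (∫ z in (0:ℝ)..a, f z) = ∫ z in a..y, f z :=
    intervalIntegral.integral_interval_sub_left (hf.intervalIntegrable 0 y)
      (hf.intervalIntegrable 0 a)
  have h2 : y - a ≤ ∫ z in a..y, f z := by
    have := intervalIntegral.integral_mono_on (μ := volume) (f := fun _ => (1:ℝ)) (g := f) hay
      intervalIntegrable_const (hf.intervalIntegrable a y) (fun x hx => ha x hx.1)
    simpa using this
  linarith

private lemma F_grow_bot (f : ℝ → ℝ) (hf : Continuous f) {b y : ℝ} (hyb : y ≤ b)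
    (hb : ∀ t, t ≤ b → f t ≤ -1) :
    (∫ z in (0:ℝ)..b, f z) + (b - y) ≤ ∫ z in (0:ℝ)..y, f z := by
  have h1 : (∫ z in (0:ℝ)..b, f z) - (∫ z in (0:ℝ)..y, f z) = ∫ z in y..b, f z :=
    intervalIntegral.integral_interval_sub_left (hf.intervalIntegrable 0 b)
      (hf.intervalIntegrable 0 y)
  have h2 : (∫ z in y..b, f z) ≤ y - b := by
    have := intervalIntegral.integral_mono_on (μ := volume) (f := f) (g := fun _ => (-1:ℝ)) hyb
      (hf.intervalIntegrable y b) intervalIntegrable_const (fun x hx => hb x hx.2)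
    simp at this
    linarith
  linarith

private lemma ode_sol (f : ℝ → ℝ) (hf : Continuous f) (u : ℝ → ℂ) (hu : Differentiable ℝ u)
    (s : ℝ) (hode : ∀ y, deriv u y = -((s * f y : ℝ) : ℂ) * u y) :
    ∀ y, u y = u 0 * Complex.exp ((-(s * ∫ z in (0:ℝ)..y, f z) : ℝ) : ℂ) := by
  intro y
  set F : ℝ → ℝ := fun t => ∫ z in (0:ℝ)..t, f z with hFdef
  have hg : ∀ t, HasDerivAt (fun t => u t * Complex.exp ((s * F t : ℝ) : ℂ)) 0 t := by
    intro t
    have h1 : HasDerivAt (fun t : ℝ => ((s * F t : ℝ) : ℂ)) ((s * f t : ℝ) : ℂ) t :=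
      (((hasDerivAt_F f hf t).const_mul s)).ofReal_comp
    have h3 := ((hu t).hasDerivAt).mul h1.cexp
    refine h3.congr_deriv ?_
    rw [hode t]
    ring
  have h0 : u y * Complex.exp ((s * F y : ℝ) : ℂ) = u 0 * Complex.exp ((s * F 0 : ℝ) : ℂ) :=
    is_const_of_deriv_eq_zero (fun t => (hg t).differentiableAt) (fun t => (hg t).deriv) y 0
  have hF0 : F 0 = 0 := intervalIntegral.integral_same
  rw [hF0] at h0
  simp only [mul_zero, Complex.ofReal_zero, Complex.exp_zero, mul_one] at h0
  have key : Complex.exp ((s * F y : ℝ) : ℂ) * Complex.exp ((-(s * F y) : ℝ) : ℂ) = 1 := by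
    rw [← Complex.exp_add]
    push_cast
    ring_nf
    exact Complex.exp_zero
  calc u y = u y * (Complex.exp ((s * F y : ℝ) : ℂ) * Complex.exp ((-(s * F y) : ℝ) : ℂ)) := by
        rw [key, mul_one]
    _ = (u y * Complex.exp ((s * F y : ℝ) : ℂ)) * Complex.exp ((-(s * F y) : ℝ) : ℂ) := by ring
    _ = u 0 * Complex.exp ((-(s * F y) : ℝ) : ℂ) := by rw [h0]

/-- **Kernels of `𝔞 = d/dy + f` and `𝔞* = -d/dy + f`.** For a continuous
profile `f` with `f(y) → ±∞` as `y → ±∞` and `F(y) = ∫₀^y f`: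
(i) `e^{-F} ∈ L²(ℝ)`; (ii) every differentiable `L²` solution of
`u' + f u = 0` is a multiple of `e^{-F}`; (iii) the only differentiable `L²`
solution of `-u' + f u = 0` is `u ≡ 0`. Thus `𝔞` has a one-dimensional
kernel spanned by `e^{-F}` while `𝔞*` has trivial kernel. -/
theorem kernel_a_and_a_star
    (f : ℝ → ℝ) (hf : Continuous f)
    (hftop : Tendsto f atTop atTop) (hfbot : Tendsto f atBot atBot) :
    Integrable (fun y : ℝ => Real.exp (-2 * ∫ z in (0:ℝ)..y, f z)) volume ∧
    (∀ u : ℝ → ℂ, Differentiable ℝ u → MemLp u 2 volume →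
      (∀ y : ℝ, deriv u y + (f y : ℂ) * u y = 0) →
      ∃ c : ℂ, ∀ y : ℝ,
        u y = c * (Real.exp (-(∫ z in (0:ℝ)..y, f z)) : ℂ)) ∧
    (∀ u : ℝ → ℂ, Differentiable ℝ u → MemLp u 2 volume →
      (∀ y : ℝ, -(deriv u y) + (f y : ℂ) * u y = 0) →
      ∀ y : ℝ, u y = 0) := by
  set F : ℝ → ℝ := fun t => ∫ z in (0:ℝ)..t, f z with hFdef
  have hFct : Continuous F :=
    continuous_iff_continuousAt.2 fun t => (hasDerivAt_F f hf t).continuousAt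
  obtain ⟨a, ha⟩ : ∃ a, ∀ t, a ≤ t → 1 ≤ f t :=
    eventually_atTop.1 (hftop.eventually_ge_atTop 1)
  obtain ⟨b0, hb0⟩ : ∃ b, ∀ t, t ≤ b → f t ≤ -1 :=
    eventually_atBot.1 (hfbot.eventually_le_atBot (-1))
  refine ⟨?_, ?_, ?_⟩
  · -- (i) integrability of exp(-2F)
    set b := min b0 a with hbdef
    have hba : b ≤ a := min_le_right _ _
    have hb : ∀ t, t ≤ b → f t ≤ -1 := fun t ht => hb0 t (le_trans ht (min_le_left _ _))
    have hgct : Continuous fun y => Real.exp (-2 * F y) :=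
      Real.continuous_exp.comp (continuous_const.mul hFct)
    have hIcc : IntegrableOn (fun y => Real.exp (-2 * F y)) (Icc b a) :=
      hgct.integrableOn_Icc
    have hIci : IntegrableOn (fun y => Real.exp (-2 * F y)) (Ici a) := by
      rw [integrableOn_Ici_iff_integrableOn_Ioi]
      have hint : IntegrableOn
          (fun x => Real.exp (-2 * F a + 2 * a) * Real.exp (-2 * x)) (Ioi a) :=
        (exp_neg_integrableOn_Ioi a two_pos).const_mul _
      refine Integrable.mono hint hgct.aestronglyMeasurable.restrict ?_
      refine (ae_restrict_iff' measurableSet_Ioi).2 (Eventually.of_forall fun y hy => ?_)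
      have hgrow := F_grow_top f hf (le_of_lt hy) ha
      rw [Real.norm_eq_abs, Real.norm_eq_abs, abs_of_pos (Real.exp_pos _),
        abs_of_pos (mul_pos (Real.exp_pos _) (Real.exp_pos _)), ← Real.exp_add]
      exact Real.exp_le_exp.2 (by linarith)
    have hIic : IntegrableOn (fun y => Real.exp (-2 * F y)) (Iic b) := by
      have hint : IntegrableOn
          (fun x => Real.exp (-2 * F b - 2 * b + b) * Real.exp x) (Iic b) :=
        (integrableOn_exp_Iic b).const_mul _
      refine Integrable.mono hint hgct.aestronglyMeasurable.restrict ?_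
      refine (ae_restrict_iff' measurableSet_Iic).2 (Eventually.of_forall fun y hy => ?_)
      have hgrow := F_grow_bot f hf hy hb
      have hyb : y ≤ b := hy
      rw [Real.norm_eq_abs, Real.norm_eq_abs, abs_of_pos (Real.exp_pos _),
        abs_of_pos (mul_pos (Real.exp_pos _) (Real.exp_pos _)), ← Real.exp_add]
      exact Real.exp_le_exp.2 (by linarith)
    have hunion : IntegrableOn (fun y => Real.exp (-2 * F y)) ((Iic b ∪ Icc b a) ∪ Ici a) :=
      (hIic.union hIcc).union hIci
    rw [Iic_union_Icc_eq_Iic hba, Iic_union_Ici] at hunion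
    exact integrableOn_univ.mp hunion
  · -- (ii)
    intro u hu _hu2 hode
    refine ⟨u 0, fun y => ?_⟩
    have hode' : ∀ y, deriv u y = -(((1:ℝ) * f y : ℝ) : ℂ) * u y := by
      intro y
      have := hode y
      push_cast
      linear_combination this
    have := ode_sol f hf u hu 1 hode' y
    rw [this]
    push_cast [Complex.ofReal_exp]
    ring_nf
  · -- (iii)
    intro u hu hu2 hode
    have hode' : ∀ y, deriv u y = -(((-1:ℝ) * f y : ℝ) : ℂ) * u y := by
      intro y
      have := hode y
      push_cast
      linear_combination -this
    have hsol := ode_sol f hf u hu (-1) hode'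
    have hc : u 0 = 0 := by
      by_contra hc
      have hsq : Integrable (fun x => ‖u x‖ ^ 2) volume :=
        (memLp_two_iff_integrable_sq_norm hu2.aestronglyMeasurable).1 hu2
      have hεpos : (0:ℝ) < ‖u 0‖ ^ 2 := pow_pos (norm_pos_iff.2 hc) 2
      have hlt := hsq.measure_norm_ge_lt_top hεpos
      set a' := max a (a - F a) with ha'def
      have hsub : Ici a' ⊆ {x | ‖u 0‖ ^ 2 ≤ ‖‖u x‖ ^ 2‖} := by
        intro x hx
        have hxa : a ≤ x := le_trans (le_max_left _ _) hx
        have hgrow := F_grow_top f hf hxa ha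
        have hFx : 0 ≤ F x := by
          have : a - F a ≤ x := le_trans (le_max_right _ _) hx
          simp only [hFdef] at hgrow ⊢
          linarith
        have hux : u x = u 0 * Complex.exp ((-(-1 * F x) : ℝ) : ℂ) := hsol x
        have hnorm : ‖u x‖ = ‖u 0‖ * Real.exp (F x) := by
          rw [hux, norm_mul, Complex.norm_exp_ofReal]
          norm_num
        have h1 : (1:ℝ) ≤ Real.exp (F x) := Real.one_le_exp hFx
        have : ‖u 0‖ ^ 2 ≤ ‖u x‖ ^ 2 := by
          rw [hnorm]
          have he2 : (1:ℝ) ≤ Real.exp (F x) ^ 2 := by nlinarith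
          nlinarith [mul_le_mul_of_nonneg_left he2 (sq_nonneg ‖u 0‖)]
        simpa [abs_of_nonneg (sq_nonneg ‖u x‖), Real.norm_eq_abs] using this
      have htop : (⊤ : ENNReal) ≤ volume {x | ‖u 0‖ ^ 2 ≤ ‖‖u x‖ ^ 2‖} := by
        rw [← Real.volume_Ici (a := a')]
        exact measure_mono hsub
      exact absurd (lt_of_le_of_lt htop hlt) (lt_irrefl _)
    intro y
    rw [hsol y, hc, zero_mul]
end

section
/- Let f : ℝ → ℝ be continuous. For every n ∈ ℕ there exist n linearly independent (over ℂ) triples (η, u, v) of compactly supported, continuously differentiable functions ℝ → ℂ satisfying the fibered shallow-water system with profile f, wavenumber ξ = 0 and frequency E = 0; equivalently, the solution space of Ĥ(0)ψ = 0 among compactly supported C¹ triples is infinite-dimensional. (These solutions have v ≡ 0 and η'(y) = −f(y)·u(y); this is the essential point spectrum of Ĥ(0) at frequency 0.) -/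
open MeasureTheory Filter

section Aux
open Set Function
noncomputable section AuxSec
namespace SWAux

def bmp (c : ℝ) : ContDiffBump c := ⟨1, 2, one_pos, one_lt_two⟩
def phi (c : ℝ) : ℝ → ℝ := fun y => bmp c y

lemma phi_contDiff (c : ℝ) : ContDiff ℝ 1 (phi c) := (bmp c).contDiff

lemma support_phi (c : ℝ) : support (phi c) = Ioo (c - 2) (c + 2) := by
  have := (bmp c).support_eq
  rw [show phi c = bmp c from rfl, this, Real.ball_eq_Ioo]; rfl

lemma phi_center (c : ℝ) : phi c c = 1 :=
  (bmp c).one_of_mem_closedBall (Metric.mem_closedBall_self (by norm_num [bmp]))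

lemma phi_zero_of_not_mem {c x : ℝ} (h : x ∉ Ioo (c - 2) (c + 2)) : phi c x = 0 := by
  rw [← notMem_support, support_phi]; exact h

lemma hcs_phi (c : ℝ) : HasCompactSupport (phi c) := by
  apply HasCompactSupport.intro (isCompact_Icc (a := c - 2) (b := c + 2))
  intro x hx
  exact phi_zero_of_not_mem fun h => hx ⟨h.1.le, h.2.le⟩

variable (f : ℝ → ℝ)

def av (c : ℝ) : ℝ := ∫ y, f y * phi c y

open Classical in
def uu (k : ℕ) : ℝ → ℝ :=
  if av f (8 * k) = 0 then phi (8 * k)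
  else fun y => av f (8 * k + 4) * phi (8 * k) y - av f (8 * k) * phi (8 * k + 4) y

lemma uu_contDiff (k : ℕ) : ContDiff ℝ 1 (uu f k) := by
  unfold uu; split
  · exact phi_contDiff _
  · exact (contDiff_const.mul (phi_contDiff _)).sub (contDiff_const.mul (phi_contDiff _))

lemma support_uu (k : ℕ) : support (uu f k) ⊆ Ioo (8 * k - 2) (8 * k + 6) := by
  unfold uu; split
  · rw [support_phi]; exact Ioo_subset_Ioo le_rfl (by linarith)
  · intro x hx
    rw [mem_support] at hx
    by_contra hmem
    have h1 : phi (8 * (k:ℝ)) x = 0 := by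
      apply phi_zero_of_not_mem
      intro ⟨a, b⟩
      exact hmem ⟨a, by linarith⟩
    have h2 : phi (8 * (k:ℝ) + 4) x = 0 := by
      apply phi_zero_of_not_mem
      intro ⟨a, b⟩
      exact hmem ⟨by linarith, by linarith⟩
    simp [h1, h2] at hx

lemma hcs_uu (k : ℕ) : HasCompactSupport (uu f k) := by
  apply HasCompactSupport.intro (isCompact_Icc (a := 8 * (k:ℝ) - 2) (b := 8 * k + 6))
  intro x hx
  by_contra h
  exact hx (Ioo_subset_Icc_self (support_uu f k (mem_support.2 h)))

variable (hf : Continuous f)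
include hf

lemma integrable_fphi (c : ℝ) : Integrable (fun y => f y * phi c y) :=
  ((hf.mul (phi_contDiff c).continuous)).integrable_of_hasCompactSupport
    ((hcs_phi c).mul_left)

lemma total (k : ℕ) : ∫ y, f y * uu f k y = 0 := by
  unfold uu; split
  case isTrue h => exact h
  case isFalse h =>
    have h1 := integrable_fphi f hf (8 * (k:ℝ))
    have h2 := integrable_fphi f hf (8 * (k:ℝ) + 4)
    have : (fun y => f y * (av f (8 * (k:ℝ) + 4) * phi (8 * k) y
          - av f (8 * k) * phi (8 * k + 4) y))
        = fun y => av f (8 * (k:ℝ) + 4) * (f y * phi (8 * k) y)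
          - av f (8 * k) * (f y * phi (8 * k + 4) y) := by
      funext y; ring
    rw [this, integral_sub (h1.const_mul _) (h2.const_mul _),
      MeasureTheory.integral_const_mul, MeasureTheory.integral_const_mul]
    show av f (8 * (k:ℝ) + 4) * av f (8 * k) - av f (8 * k) * av f (8 * (k:ℝ) + 4) = 0
    ring

def eta (k : ℕ) : ℝ → ℂ :=
  fun y => ((- ∫ t in (8 * (k:ℝ) - 2)..y, f t * uu f k t : ℝ) : ℂ)

lemma eta_hasDerivAt (k : ℕ) (y : ℝ) :
    HasDerivAt (eta f k) ((-(f y * uu f k y) : ℝ) : ℂ) y := by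
  have hc : Continuous fun t => f t * uu f k t := hf.mul (uu_contDiff f k).continuous
  have h1 : HasDerivAt (fun y => ∫ t in (8 * (k:ℝ) - 2)..y, f t * uu f k t)
      (f y * uu f k y) y :=
    intervalIntegral.integral_hasDerivAt_right (hc.intervalIntegrable _ _)
      (hc.stronglyMeasurableAtFilter _ _) hc.continuousAt
  exact h1.neg.ofReal_comp

lemma eta_contDiff (k : ℕ) : ContDiff ℝ 1 (eta f k) := by
  rw [contDiff_one_iff_deriv]
  constructor
  · exact fun y => (eta_hasDerivAt f hf k y).differentiableAt
  · have : deriv (eta f k) = fun y => ((-(f y * uu f k y) : ℝ) : ℂ) := by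
      funext y; exact (eta_hasDerivAt f hf k y).deriv
    rw [this]
    exact Complex.continuous_ofReal.comp (hf.mul (uu_contDiff f k).continuous).neg

lemma eta_zero_outside (k : ℕ) {y : ℝ}
    (hy : y ∉ Icc (8 * (k:ℝ) - 2) (8 * k + 6)) : eta f k y = 0 := by
  rw [mem_Icc, not_and_or, not_le, not_le] at hy
  have hzero : ∀ t : ℝ, t ≤ 8 * (k:ℝ) - 2 → f t * uu f k t = 0 := by
    intro t ht
    have : uu f k t = 0 := by
      by_contra h
      exact absurd (support_uu f k (mem_support.2 h)).1 (not_lt.2 ht)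
    simp [this]
  rcases hy with hy | hy
  · have : (∫ t in (8 * (k:ℝ) - 2)..y, f t * uu f k t) = 0 := by
      rw [intervalIntegral.integral_congr (g := fun _ => 0)]
      · simp
      · intro t ht
        rw [uIcc_of_ge hy.le, mem_Icc] at ht
        exact hzero t ht.2
    simp [eta, this]
  · have hsupp : support (fun t => f t * uu f k t) ⊆ Ioc (8 * (k:ℝ) - 2) y := by
      intro t ht
      have ht' : uu f k t ≠ 0 := by
        intro h0; rw [mem_support] at ht; exact ht (by simp [h0])
      have := support_uu f k (mem_support.2 ht')
      exact ⟨this.1, le_of_lt (lt_of_lt_of_le this.2 hy.le)⟩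
    have : (∫ t in (8 * (k:ℝ) - 2)..y, f t * uu f k t) = 0 := by
      rw [intervalIntegral.integral_eq_integral_of_support_subset hsupp]
      exact total f hf k
    simp [eta, this]

lemma hcs_eta (k : ℕ) : HasCompactSupport (eta f k) := by
  apply HasCompactSupport.intro (isCompact_Icc (a := 8 * (k:ℝ) - 2) (b := 8 * k + 6))
  intro x hx
  exact eta_zero_outside f hf k hx

open Classical in
def pt (k : ℕ) : ℝ := if av f (8 * k) = 0 then 8 * k else 8 * k + 4

omit hf in
lemma uu_pt_ne (k : ℕ) : uu f k (pt f k) ≠ 0 := by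
  by_cases h : av f (8 * (k:ℝ)) = 0
  · simp only [uu, pt, if_pos h]
    rw [phi_center]; exact one_ne_zero
  · simp only [uu, pt, if_neg h]
    have h1 : phi (8 * (k:ℝ)) (8 * k + 4) = 0 := by
      apply phi_zero_of_not_mem
      intro ⟨a, b⟩; linarith
    rw [h1, phi_center]
    simpa using h

omit hf in
lemma pt_cases (k : ℕ) : pt f k = 8 * k ∨ pt f k = 8 * k + 4 := by
  unfold pt; split
  · exact Or.inl rfl
  · exact Or.inr rfl

omit hf in
lemma uu_pt_other {j k : ℕ} (hjk : j ≠ k) : uu f j (pt f k) = 0 := by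
  by_contra h
  have hmem := support_uu f j (mem_support.2 h)
  have hbound : 8 * (j:ℝ) - 2 < pt f k ∧ (pt f k : ℝ) < 8 * j + 6 := ⟨hmem.1, hmem.2⟩
  have hpt := pt_cases f k
  have h1 : 8 * j < 8 * k + 6 := by
    rcases hpt with hp | hp <;> rw [hp] at hbound <;>
      exact_mod_cast (by linarith [hbound.1] : (8 * (j:ℝ)) < 8 * k + 6)
  have h2 : 8 * k < 8 * j + 6 := by
    rcases hpt with hp | hp <;> rw [hp] at hbound <;>
      exact_mod_cast (by linarith [hbound.2] : (8 * (k:ℝ)) < 8 * j + 6)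
  omega

end SWAux
end AuxSec
end Aux


/-- **Essential point spectrum of `Ĥ(0)` at frequency `0`.** For any
continuous Coriolis profile `f` and every `n`, there are `n` linearly
independent (over `ℂ`) triples of compactly supported `C¹` functions solving
the fibered shallow-water system with `ξ = 0` and `E = 0`: the solution space
of `Ĥ(0)ψ = 0` is infinite-dimensional. -/
theorem kernel_at_xi_zero_infinite_dimensional
    (f : ℝ → ℝ) (hf : Continuous f) :
    ∀ n : ℕ, ∃ ψ : Fin n → (ℝ → ℂ) × (ℝ → ℂ) × (ℝ → ℂ),
      LinearIndependent ℂ ψ ∧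
      ∀ k : Fin n,
        HasCompactSupport (ψ k).1 ∧ HasCompactSupport (ψ k).2.1 ∧
          HasCompactSupport (ψ k).2.2 ∧
        ContDiff ℝ 1 (ψ k).1 ∧ ContDiff ℝ 1 (ψ k).2.1 ∧ ContDiff ℝ 1 (ψ k).2.2 ∧
        FiberedShallowWater f 0 0 (ψ k).1 (ψ k).2.1 (ψ k).2.2 := by
  intro n
  refine ⟨fun k => (SWAux.eta f k, fun y => ((SWAux.uu f k y : ℝ) : ℂ),
      fun _ => (0 : ℂ)), ?_, ?_⟩
  · rw [Fintype.linearIndependent_iff]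
    intro g hg k
    have h2 : (∑ i : Fin n, g i * (SWAux.uu f i (SWAux.pt f k) : ℂ)) = 0 := by
      have := congrArg
        (fun F : (ℝ → ℂ) × (ℝ → ℂ) × (ℝ → ℂ) => F.2.1 (SWAux.pt f k)) hg
      simpa [Prod.fst_sum, Prod.snd_sum] using this
    rw [Finset.sum_eq_single k] at h2
    · have hne : ((SWAux.uu f k (SWAux.pt f k) : ℝ) : ℂ) ≠ 0 := by
        exact_mod_cast SWAux.uu_pt_ne f k
      exact (mul_eq_zero.1 h2).resolve_right hne
    · intro j _ hjk
      have hj : (j : ℕ) ≠ (k : ℕ) := fun h => hjk (Fin.ext h)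
      rw [SWAux.uu_pt_other f hj]
      simp
    · intro h; exact absurd (Finset.mem_univ k) h
  · intro k
    refine ⟨SWAux.hcs_eta f hf k, ?_, ?_, SWAux.eta_contDiff f hf k, ?_,
      contDiff_const, ?_⟩
    · exact (SWAux.hcs_uu f k).comp_left (g := Complex.ofReal) Complex.ofReal_zero
    · exact HasCompactSupport.intro isCompact_Icc
        (K := Set.Icc (0:ℝ) 1) (fun x _ => rfl)
    · exact Complex.ofRealCLM.contDiff.comp (SWAux.uu_contDiff f k)
    · intro y
      refine ⟨by simp, by simp, ?_⟩
      have hd := (SWAux.eta_hasDerivAt f hf (k : ℕ) y).deriv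
      rw [hd]
      push_cast
      ring
end

section
/- Let f : ℝ → ℝ be continuously differentiable and suppose there is no nonempty open interval on which f' vanishes identically (i.e. the zero set of f' has empty interior). Let ξ ∈ ℝ with ξ ≠ 0, and suppose η, u, v : ℝ → ℂ are differentiable and satisfy the fibered shallow-water system with profile f, wavenumber ξ and frequency E = 0. Then η ≡ 0, u ≡ 0 and v ≡ 0. In particular, for such profiles the fibered shallow-water Hamiltonian Ĥ(ξ) has no eigenvalue at frequency 0 for any ξ ≠ 0. -/
open MeasureTheory Filter

/-- **No eigenvalue at frequency `0` for `ξ ≠ 0`.** If `f` is `C¹` and the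
zero set of `f'` has empty interior, then any differentiable solution of the
fibered shallow-water system at frequency `E = 0` with wavenumber `ξ ≠ 0`
vanishes identically. -/
theorem no_zero_mode_for_nonzero_xi
    (f : ℝ → ℝ) (hf : ContDiff ℝ 1 f)
    (hf' : interior {y : ℝ | deriv f y = 0} = ∅)
    (ξ : ℝ) (hξ : ξ ≠ 0)
    (η u v : ℝ → ℂ)
    (hηd : Differentiable ℝ η) (hud : Differentiable ℝ u) (hvd : Differentiable ℝ v)
    (hsys : FiberedShallowWater f ξ 0 η u v) :
    ∀ y : ℝ, η y = 0 ∧ u y = 0 ∧ v y = 0 := by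
  have hξC : (ξ : ℂ) ≠ 0 := by exact_mod_cast hξ
  have hfd : Differentiable ℝ f := hf.differentiable one_ne_zero
  have hη_eq : η = fun t => -(Complex.I * (f t : ℂ) * v t) / ξ := by
    funext t
    have e2 := (hsys t).2.1
    simp only [Complex.ofReal_zero, zero_mul] at e2
    field_simp
    linear_combination e2
  -- v vanishes wherever f' ≠ 0
  have hkey : ∀ y : ℝ, (Complex.ofReal (deriv f y)) * v y = 0 := by
    intro y
    have hfR : HasDerivAt (fun t => (f t : ℂ)) (Complex.ofReal (deriv f y)) y :=
      ((hfd y).hasDerivAt).ofReal_comp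
    have hv : HasDerivAt v (deriv v y) y := (hvd y).hasDerivAt
    have hprod : HasDerivAt (fun t => Complex.I * (f t : ℂ) * v t)
        (Complex.I * (Complex.ofReal (deriv f y)) * v y + Complex.I * (f y : ℂ) * deriv v y) y := by
      exact (hfR.const_mul Complex.I).mul hv
    have hd : HasDerivAt (fun t => -(Complex.I * (f t : ℂ) * v t) / ξ)
        (-(Complex.I * (Complex.ofReal (deriv f y)) * v y + Complex.I * (f y : ℂ) * deriv v y) / ξ) y :=
      hprod.neg.div_const _
    have hderiv : deriv η y
        = -(Complex.I * (Complex.ofReal (deriv f y)) * v y + Complex.I * (f y : ℂ) * deriv v y) / ξ := by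
      rw [hη_eq]; exact hd.deriv
    have e1 := (hsys y).1
    have e3 := (hsys y).2.2
    simp only [Complex.ofReal_zero, zero_mul] at e1 e3
    rw [hderiv] at e3
    have hI : Complex.I ≠ 0 := Complex.I_ne_zero
    field_simp at e3
    -- e3 plus e1 give f' v = 0
    have : Complex.I * (Complex.ofReal (deriv f y)) * v y = 0 := by
      linear_combination (-Complex.I) * e3 + (f y : ℂ) * e1 + (Complex.I * (Complex.ofReal (deriv f y)) * v y + Complex.I * (f y : ℂ) * deriv v y - (ξ : ℂ) * (f y : ℂ) * u y) * Complex.I_sq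
    have h2 : Complex.I ≠ 0 := Complex.I_ne_zero
    rcases mul_eq_zero.mp this with h | h
    · rcases mul_eq_zero.mp h with h' | h'
      · exact absurd h' h2
      · simp [h']
    · simp [h]
  have hv0 : v = fun _ => (0 : ℂ) := by
    have hcont : Continuous (deriv f) := hf.continuous_deriv le_rfl
    have hdense : Dense {y : ℝ | deriv f y ≠ 0} := by
      have hs : {y : ℝ | deriv f y ≠ 0} = {y : ℝ | deriv f y = 0}ᶜ := by ext; simp
      rw [hs]
      exact interior_eq_empty_iff_dense_compl.mp hf'
    refine Continuous.ext_on hdense hvd.continuous continuous_const ?_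
    intro y hy
    have := hkey y
    have hfy : (Complex.ofReal (deriv f y)) ≠ 0 := by exact_mod_cast hy
    exact (mul_eq_zero.mp this).resolve_left hfy
  intro y
  have hvy : v y = 0 := by rw [hv0]
  have hdv : deriv v y = 0 := by rw [hv0]; simp
  have e1 := (hsys y).1
  simp only [Complex.ofReal_zero, zero_mul, hdv, mul_zero, sub_zero] at e1
  have hu : u y = 0 := by
    rcases mul_eq_zero.mp e1 with h | h
    · exact absurd h hξC
    · exact h
  refine ⟨?_, hu, hvy⟩
  rw [hη_eq]; simp [hvy]
end

section
/- Let y₀ ∈ ℝ and let f : ℝ → ℝ be continuously differentiable on ℝ∖{y₀} with bounded derivative there and with finite one-sided limits f(y₀⁺), f(y₀⁻); set [f] := f(y₀⁺) − f(y₀⁻). Let μ, λ ∈ ℝ. Suppose v : ℝ → ℂ is continuous on ℝ, twice continuously differentiable on ℝ∖{y₀}, its derivative has one-sided limits at y₀ satisfying v'(y₀⁺) − v'(y₀⁻) = μ·[f]·v(y₀), and −v''(y) + (f(y)² + μ·f'(y))·v(y) = λ·v(y) for all y ≠ y₀; assume moreover v, v', f·v ∈ L²(ℝ), and v'(y)·conj(v(y))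 → 0 and f(y)·|v(y)|² → 0 as |y| → ∞. Then ∫_ℝ |v'(y) + f(y)·v(y)|² dy + (μ+1)·( ∫_ℝ f'(y)·|v(y)|² dy + [f]·|v(y₀)|² ) = λ·∫_ℝ |v(y)|² dy. -/
open MeasureTheory Filter

private lemma re_mul_conj' (z : ℂ) : (z * (starRingEnd ℂ) z).re = ‖z‖^2 := by
  rw [Complex.mul_conj]
  simp [Complex.normSq_eq_norm_sq, ← Complex.ofReal_pow]

private lemma norm_add_sq' (a b : ℂ) :
    ‖a + b‖^2 = ‖a‖^2 + 2*(a * (starRingEnd ℂ) b).re + ‖b‖^2 := by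
  simp only [Complex.sq_norm, Complex.normSq_apply, Complex.mul_re,
    Complex.conj_re, Complex.conj_im, Complex.add_re, Complex.add_im]
  ring

/-- **Quadratic-form identity with an interface jump.** Let `f` be `C¹` away
from `y₀` with bounded derivative there and one-sided limits `f(y₀±)`, and
let `v` be continuous on `ℝ`, `C²` away from `y₀`, with
`v'(y₀⁺) - v'(y₀⁻) = μ [f] v(y₀)` and solving
`-v'' + (f² + μ f') v = λ v` away from `y₀`, with `v, v', f·v ∈ L²` and
vanishing boundary terms at `±∞`. Then
`‖v' + f v‖² + (μ+1)(∫ f' |v|² + [f] |v(y₀)|²) = λ ‖v‖²`. -/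
theorem quadratic_form_identity_with_jump
    (y₀ : ℝ) (f : ℝ → ℝ)
    (hf : ContDiffOn ℝ 1 f {y₀}ᶜ)
    (M : ℝ) (hM : ∀ y : ℝ, y ≠ y₀ → |deriv f y| ≤ M)
    (fplus fminus : ℝ)
    (hfp : Tendsto f (nhdsWithin y₀ (Set.Ioi y₀)) (nhds fplus))
    (hfm : Tendsto f (nhdsWithin y₀ (Set.Iio y₀)) (nhds fminus))
    (μ lam : ℝ)
    (v : ℝ → ℂ)
    (hvc : Continuous v) (hv : ContDiffOn ℝ 2 v {y₀}ᶜ)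
    (vp vm : ℂ)
    (hvp : Tendsto (deriv v) (nhdsWithin y₀ (Set.Ioi y₀)) (nhds vp))
    (hvm : Tendsto (deriv v) (nhdsWithin y₀ (Set.Iio y₀)) (nhds vm))
    (hjump : vp - vm = ((μ * (fplus - fminus) : ℝ) : ℂ) * v y₀)
    (hode : ∀ y : ℝ, y ≠ y₀ →
      -(deriv (deriv v) y) + (((f y) ^ 2 + μ * deriv f y : ℝ) : ℂ) * v y
        = (lam : ℂ) * v y)
    (hv2 : MemLp v 2 volume) (hdv2 : MemLp (deriv v) 2 volume)
    (hfv2 : MemLp (fun y => (f y : ℂ) * v y) 2 volume)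
    (hbc1 : Tendsto (fun y => deriv v y * (starRingEnd ℂ) (v y)) atTop (nhds 0))
    (hbc2 : Tendsto (fun y => deriv v y * (starRingEnd ℂ) (v y)) atBot (nhds 0))
    (hbc3 : Tendsto (fun y => f y * ‖v y‖ ^ 2) atTop (nhds 0))
    (hbc4 : Tendsto (fun y => f y * ‖v y‖ ^ 2) atBot (nhds 0)) :
    (∫ y : ℝ, ‖deriv v y + (f y : ℂ) * v y‖ ^ 2)
      + (μ + 1) * ((∫ y : ℝ, deriv f y * ‖v y‖ ^ 2)
          + (fplus - fminus) * ‖v y₀‖ ^ 2)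
      = lam * ∫ y : ℝ, ‖v y‖ ^ 2 := by
  have hso : IsOpen ({y₀}ᶜ : Set ℝ) := isOpen_compl_singleton
  -- pointwise differentiability
  have hd1 : ∀ y : ℝ, y ≠ y₀ → HasDerivAt v (deriv v y) y := fun y hy =>
    ((hv.contDiffAt (hso.mem_nhds hy)).differentiableAt (by norm_num)).hasDerivAt
  have hd2 : ∀ y : ℝ, y ≠ y₀ → HasDerivAt (deriv v) (deriv (deriv v) y) y := by
    have h' : ContDiffOn ℝ 1 (deriv v) {y₀}ᶜ := hv.deriv_of_isOpen hso (by norm_num)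
    exact fun y hy =>
      ((h'.contDiffAt (hso.mem_nhds hy)).differentiableAt (by norm_num)).hasDerivAt
  have hdf : ∀ y : ℝ, y ≠ y₀ → HasDerivAt f (deriv f y) y := fun y hy =>
    ((hf.contDiffAt (hso.mem_nhds hy)).differentiableAt (by norm_num)).hasDerivAt
  have hconj : ∀ y : ℝ, y ≠ y₀ →
      HasDerivAt (fun y => (starRingEnd ℂ) (v y)) ((starRingEnd ℂ) (deriv v y)) y := by
    intro y hy
    exact (hd1 y hy).star
  -- the quantities
  set H : ℝ → ℝ := fun y => (deriv v y * (starRingEnd ℂ) (v y)).re with hHdef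
  set φ : ℝ → ℝ :=
    fun y => (f y ^ 2 + μ * deriv f y - lam) * ‖v y‖ ^ 2 + ‖deriv v y‖ ^ 2 with hφdef
  set ψ : ℝ → ℝ := fun y => deriv f y * ‖v y‖ ^ 2 + f y * (2 * H y) with hψdef
  -- derivative of H is φ (using the ODE)
  have hH : ∀ y : ℝ, y ≠ y₀ → HasDerivAt H (φ y) y := by
    intro y hy
    have hmul := (hd2 y hy).mul (hconj y hy)
    have hre : HasDerivAt (fun x => (deriv v x * (starRingEnd ℂ) (v x)).re)
        ((deriv (deriv v) y * (starRingEnd ℂ) (v y) + deriv v y * (starRingEnd ℂ) (deriv v y)).re) y :=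
      (Complex.reCLM.hasFDerivAt).comp_hasDerivAt y hmul
    have hode' : deriv (deriv v) y = ((f y ^ 2 + μ * deriv f y - lam : ℝ) : ℂ) * v y := by
      have h := hode y hy
      push_cast at h ⊢
      linear_combination -h
    convert hre using 1
    simp only [Complex.reCLM_apply, Complex.add_re, hode', mul_assoc]
    rw [re_mul_conj', Complex.re_ofReal_mul, re_mul_conj']
  -- derivative of ‖v‖²
  have hN : ∀ y : ℝ, y ≠ y₀ → HasDerivAt (fun y => ‖v y‖ ^ 2) (2 * H y) y := by
    intro y hy
    have hmul := (hd1 y hy).mul (hconj y hy)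
    have hre : HasDerivAt (fun x => (v x * (starRingEnd ℂ) (v x)).re)
        ((deriv v y * (starRingEnd ℂ) (v y) + v y * (starRingEnd ℂ) (deriv v y)).re) y :=
      (Complex.reCLM.hasFDerivAt).comp_hasDerivAt y hmul
    have hfn : (fun y => ‖v y‖ ^ 2) = fun y => (v y * (starRingEnd ℂ) (v y)).re :=
      funext fun y => (re_mul_conj' _).symm
    rw [hfn]
    convert hre using 1
    simp only [Complex.reCLM_apply, Complex.add_re, hHdef]
    have heq : v y * (starRingEnd ℂ) (deriv v y)
        = (starRingEnd ℂ) (deriv v y * (starRingEnd ℂ) (v y)) := by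
      rw [map_mul, Complex.conj_conj]; ring
    rw [heq, Complex.conj_re]; ring
  have hG : ∀ y : ℝ, y ≠ y₀ → HasDerivAt (fun y => f y * ‖v y‖ ^ 2) (ψ y) y := fun y hy =>
    (hdf y hy).mul (hN y hy)
  -- a.e. y ≠ y₀
  have hne : ∀ᵐ (y : ℝ) ∂volume, y ≠ y₀ := by
    rw [ae_iff]
    simpa [not_not, Set.setOf_eq_eq_singleton] using measure_singleton (α := ℝ) y₀
  -- integrability
  have i5 : Integrable (fun y => ‖v y‖ ^ 2) volume :=
    (memLp_two_iff_integrable_sq_norm hv2.aestronglyMeasurable).1 hv2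
  have i1 : Integrable (fun y => ‖deriv v y‖ ^ 2) volume :=
    (memLp_two_iff_integrable_sq_norm hdv2.aestronglyMeasurable).1 hdv2
  have i3' : Integrable (fun y => ‖(f y : ℂ) * v y‖ ^ 2) volume :=
    (memLp_two_iff_integrable_sq_norm hfv2.aestronglyMeasurable).1 hfv2
  have hnormfv : ∀ y : ℝ, ‖(f y : ℂ) * v y‖ ^ 2 = f y ^ 2 * ‖v y‖ ^ 2 := by
    intro y
    rw [norm_mul, mul_pow, Complex.norm_real, Real.norm_eq_abs, sq_abs]
  have i3 : Integrable (fun y => f y ^ 2 * ‖v y‖ ^ 2) volume :=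
    i3'.congr (ae_of_all _ fun y => hnormfv y)
  have i4 : Integrable (fun y => deriv f y * ‖v y‖ ^ 2) volume := by
    refine Integrable.mono' (i5.const_mul M) ?_ ?_
    · exact ((measurable_deriv f).mul ((hvc.norm.pow 2).measurable)).aestronglyMeasurable
    · filter_upwards [hne] with y hy
      rw [Real.norm_eq_abs, abs_mul, abs_of_nonneg (by positivity : (0:ℝ) ≤ ‖v y‖ ^ 2)]
      exact mul_le_mul_of_nonneg_right (hM y hy) (by positivity)
  have i2c : Integrable (fun y => deriv v y * (starRingEnd ℂ) ((f y : ℂ) * v y)) volume := by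
    refine Integrable.mono' (i1.add i3') ?_ (ae_of_all _ fun y => ?_)
    · exact hdv2.aestronglyMeasurable.mul
        (Complex.continuous_conj.comp_aestronglyMeasurable hfv2.aestronglyMeasurable)
    · simp only [Pi.add_apply]
      rw [norm_mul, RCLike.norm_conj]
      nlinarith [norm_nonneg (deriv v y), norm_nonneg ((f y : ℂ) * v y),
        sq_nonneg (‖deriv v y‖ - ‖(f y : ℂ) * v y‖)]
  have i2 : Integrable (fun y => f y * H y) volume := by
    have := Complex.reCLM.integrable_comp i2c
    refine this.congr (ae_of_all _ fun y => ?_)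
    simp only [Complex.reCLM_apply, hHdef]
    rw [map_mul, Complex.conj_ofReal,
      show deriv v y * ((f y : ℂ) * (starRingEnd ℂ) (v y))
        = (f y : ℂ) * (deriv v y * (starRingEnd ℂ) (v y)) by ring,
      Complex.re_ofReal_mul]
  have iA : Integrable (fun y => f y ^ 2 * ‖v y‖ ^ 2 + μ * (deriv f y * ‖v y‖ ^ 2)) volume :=
    i3.add (i4.const_mul μ)
  have iB : Integrable (fun y => f y ^ 2 * ‖v y‖ ^ 2 + μ * (deriv f y * ‖v y‖ ^ 2)
      - lam * ‖v y‖ ^ 2) volume := iA.sub (i5.const_mul lam)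
  have iC : Integrable (fun y => f y ^ 2 * ‖v y‖ ^ 2 + μ * (deriv f y * ‖v y‖ ^ 2)
      - lam * ‖v y‖ ^ 2 + ‖deriv v y‖ ^ 2) volume := iB.add i1
  have iφ : Integrable φ volume := by
    refine iC.congr (ae_of_all _ fun y => ?_)
    show _ = φ y
    simp only [hφdef]; ring
  have iψA : Integrable (fun y => deriv f y * ‖v y‖ ^ 2 + 2 * (f y * H y)) volume :=
    i4.add (i2.const_mul 2)
  have iψ : Integrable ψ volume := by
    refine iψA.congr (ae_of_all _ fun y => ?_)
    show _ = ψ y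
    simp only [hψdef]; ring
  -- limits of H
  have THp : Tendsto H (nhdsWithin y₀ (Set.Ioi y₀)) (nhds ((vp * (starRingEnd ℂ) (v y₀)).re)) := by
    have h1 : Tendsto (fun y => (starRingEnd ℂ) (v y)) (nhdsWithin y₀ (Set.Ioi y₀))
        (nhds ((starRingEnd ℂ) (v y₀))) :=
      ((Complex.continuous_conj.comp hvc).tendsto y₀).mono_left nhdsWithin_le_nhds
    exact (Complex.continuous_re.tendsto _).comp (hvp.mul h1)
  have THm : Tendsto H (nhdsWithin y₀ (Set.Iio y₀)) (nhds ((vm * (starRingEnd ℂ) (v y₀)).re)) := by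
    have h1 : Tendsto (fun y => (starRingEnd ℂ) (v y)) (nhdsWithin y₀ (Set.Iio y₀))
        (nhds ((starRingEnd ℂ) (v y₀))) :=
      ((Complex.continuous_conj.comp hvc).tendsto y₀).mono_left nhdsWithin_le_nhds
    exact (Complex.continuous_re.tendsto _).comp (hvm.mul h1)
  have THtop : Tendsto H atTop (nhds 0) := by
    have := (Complex.continuous_re.tendsto 0).comp hbc1
    exact this
  have THbot : Tendsto H atBot (nhds 0) := by
    have := (Complex.continuous_re.tendsto 0).comp hbc2
    exact this
  -- limits of G
  have TN : Tendsto (fun y => ‖v y‖ ^ 2) (nhds y₀) (nhds (‖v y₀‖ ^ 2)) :=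
    (hvc.norm.pow 2).tendsto y₀
  have TGp : Tendsto (fun y => f y * ‖v y‖ ^ 2) (nhdsWithin y₀ (Set.Ioi y₀))
      (nhds (fplus * ‖v y₀‖ ^ 2)) := hfp.mul (TN.mono_left nhdsWithin_le_nhds)
  have TGm : Tendsto (fun y => f y * ‖v y‖ ^ 2) (nhdsWithin y₀ (Set.Iio y₀))
      (nhds (fminus * ‖v y₀‖ ^ 2)) := hfm.mul (TN.mono_left nhdsWithin_le_nhds)
  -- general IBP on both half-lines
  have key : ∀ (F : ℝ → ℝ) (F' : ℝ → ℝ) (Lp Lm : ℝ),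
      (∀ y : ℝ, y ≠ y₀ → HasDerivAt F (F' y) y) →
      Integrable F' volume →
      Tendsto F (nhdsWithin y₀ (Set.Ioi y₀)) (nhds Lp) →
      Tendsto F (nhdsWithin y₀ (Set.Iio y₀)) (nhds Lm) →
      Tendsto F atTop (nhds 0) → Tendsto F atBot (nhds 0) →
      ∫ y : ℝ, F' y = Lm - Lp := by
    intro F F' Lp Lm hderiv hint hLp hLm htop hbot
    set Fp : ℝ → ℝ := Function.update F y₀ Lp with hFp
    set Fm : ℝ → ℝ := Function.update F y₀ Lm with hFm
    have hupd : ∀ (c : ℝ) {y : ℝ}, y ≠ y₀ → Function.update F y₀ c y = F y :=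
      fun c y hy => Function.update_of_ne hy _ _
    have hIoi : ∫ y in Set.Ioi y₀, F' y = 0 - Lp := by
      have hcont : ContinuousWithinAt Fp (Set.Ici y₀) y₀ := by
        have hval : Fp y₀ = Lp := Function.update_self _ _ _
        rw [ContinuousWithinAt, hval, ← Set.Ioi_insert, nhdsWithin_insert, tendsto_sup]
        refine ⟨by simpa [hval] using tendsto_pure_nhds Fp y₀, ?_⟩
        refine hLp.congr' ?_
        filter_upwards [self_mem_nhdsWithin] with y hy
        exact (hupd Lp (ne_of_gt hy)).symm
      have hder : ∀ x ∈ Set.Ioi y₀, HasDerivAt Fp (F' x) x := by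
        intro x hx
        refine (hderiv x (ne_of_gt hx)).congr_of_eventuallyEq ?_
        filter_upwards [hso.mem_nhds (ne_of_gt hx)] with y hy
        exact hupd Lp hy
      have htop' : Tendsto Fp atTop (nhds 0) := by
        refine htop.congr' ?_
        filter_upwards [Ioi_mem_atTop y₀] with y hy
        exact (hupd Lp (ne_of_gt hy)).symm
      have := integral_Ioi_of_hasDerivAt_of_tendsto hcont hder hint.integrableOn htop'
      rw [this]; simp [hFp]
    have hIic : ∫ y in Set.Iic y₀, F' y = Lm - 0 := by
      have hcont : ContinuousWithinAt Fm (Set.Iic y₀) y₀ := by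
        have hval : Fm y₀ = Lm := Function.update_self _ _ _
        rw [ContinuousWithinAt, hval, ← Set.Iio_insert, nhdsWithin_insert, tendsto_sup]
        refine ⟨by simpa [hval] using tendsto_pure_nhds Fm y₀, ?_⟩
        refine hLm.congr' ?_
        filter_upwards [self_mem_nhdsWithin] with y hy
        exact (hupd Lm (ne_of_lt hy)).symm
      have hder : ∀ x ∈ Set.Iio y₀, HasDerivAt Fm (F' x) x := by
        intro x hx
        refine (hderiv x (ne_of_lt hx)).congr_of_eventuallyEq ?_
        filter_upwards [hso.mem_nhds (ne_of_lt hx)] with y hy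
        exact hupd Lm hy
      have hbot' : Tendsto Fm atBot (nhds 0) := by
        refine hbot.congr' ?_
        filter_upwards [Iio_mem_atBot y₀] with y hy
        exact (hupd Lm (ne_of_lt hy)).symm
      have := integral_Iic_of_hasDerivAt_of_tendsto hcont hder hint.integrableOn hbot'
      rw [this]; simp [hFm]
    rw [← intervalIntegral.integral_Iic_add_Ioi hint.integrableOn hint.integrableOn, hIoi, hIic]
    ring
  -- apply to H and G
  have EA : ∫ y : ℝ, φ y
      = (vm * (starRingEnd ℂ) (v y₀)).re - (vp * (starRingEnd ℂ) (v y₀)).re :=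
    key H φ _ _ hH iφ THp THm THtop THbot
  have EB : ∫ y : ℝ, ψ y = fminus * ‖v y₀‖ ^ 2 - fplus * ‖v y₀‖ ^ 2 :=
    key (fun y => f y * ‖v y‖ ^ 2) ψ _ _ hG iψ TGp TGm hbc3 hbc4
  -- rewrite the jump term
  have EA' : ∫ y : ℝ, φ y = -(μ * (fplus - fminus) * ‖v y₀‖ ^ 2) := by
    rw [EA, ← Complex.sub_re, ← sub_mul,
      show vm - vp = -(vp - vm) by ring, hjump]
    rw [show -(((μ * (fplus - fminus) : ℝ) : ℂ) * v y₀) * (starRingEnd ℂ) (v y₀)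
        = -(((μ * (fplus - fminus) : ℝ) : ℂ) * (v y₀ * (starRingEnd ℂ) (v y₀))) by ring]
    rw [Complex.neg_re, Complex.re_ofReal_mul, re_mul_conj']
    try ring
  -- split the integrals
  have SA : ∫ y : ℝ, φ y = (∫ y : ℝ, f y ^ 2 * ‖v y‖ ^ 2)
      + μ * (∫ y : ℝ, deriv f y * ‖v y‖ ^ 2) - lam * (∫ y : ℝ, ‖v y‖ ^ 2)
      + ∫ y : ℝ, ‖deriv v y‖ ^ 2 := by
    rw [show ∫ y : ℝ, φ y = ∫ y : ℝ, ((f y ^ 2 * ‖v y‖ ^ 2 + μ * (deriv f y * ‖v y‖ ^ 2)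
        - lam * ‖v y‖ ^ 2) + ‖deriv v y‖ ^ 2) from
      integral_congr_ae (ae_of_all _ fun y => by simp only [hφdef]; ring)]
    rw [integral_add iB i1, integral_sub iA (i5.const_mul lam),
      integral_add i3 (i4.const_mul μ), integral_const_mul, integral_const_mul]
  have SB : ∫ y : ℝ, ψ y = (∫ y : ℝ, deriv f y * ‖v y‖ ^ 2)
      + 2 * ∫ y : ℝ, f y * H y := by
    rw [show ∫ y : ℝ, ψ y = ∫ y : ℝ, (deriv f y * ‖v y‖ ^ 2 + 2 * (f y * H y)) from
      integral_congr_ae (ae_of_all _ fun y => by simp only [hψdef]; ring)]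
    rw [integral_add i4 (i2.const_mul 2), integral_const_mul]
  have SD : ∫ y : ℝ, ‖deriv v y + (f y : ℂ) * v y‖ ^ 2
      = (∫ y : ℝ, ‖deriv v y‖ ^ 2) + 2 * (∫ y : ℝ, f y * H y)
        + ∫ y : ℝ, f y ^ 2 * ‖v y‖ ^ 2 := by
    have hpt : ∀ y : ℝ, ‖deriv v y + (f y : ℂ) * v y‖ ^ 2
        = ‖deriv v y‖ ^ 2 + 2 * (f y * H y) + f y ^ 2 * ‖v y‖ ^ 2 := by
      intro y
      rw [norm_add_sq', hnormfv, map_mul, Complex.conj_ofReal,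
        show deriv v y * ((f y : ℂ) * (starRingEnd ℂ) (v y))
          = (f y : ℂ) * (deriv v y * (starRingEnd ℂ) (v y)) by ring]
      simp only [hHdef]
      rw [Complex.re_ofReal_mul]
    rw [show (∫ y : ℝ, ‖deriv v y + (f y : ℂ) * v y‖ ^ 2)
        = ∫ y : ℝ, (‖deriv v y‖ ^ 2 + 2 * (f y * H y) + f y ^ 2 * ‖v y‖ ^ 2) from
      integral_congr_ae (ae_of_all _ fun y => hpt y)]
    have iE : Integrable (fun y => ‖deriv v y‖ ^ 2 + 2 * (f y * H y)) volume :=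
      i1.add (i2.const_mul 2)
    rw [integral_add iE i3, integral_add i1 (i2.const_mul 2), integral_const_mul]
  -- final algebra
  have h1 := EA'.symm.trans SA
  have h2 := EB.symm.trans SB
  rw [SD]
  linear_combination -h1 - h2
end

section
/- Let f : ℝ → ℝ be continuous with f(y) → +∞ as y → +∞ and f(y) → −∞ as y → −∞. Let ξ < 0 and E = −ξ > 0. Suppose η, u, v : ℝ → ℂ are differentiable, square-integrable, satisfy the fibered shallow-water system with profile f, wavenumber ξ and frequency E = −ξ, and are normalized: ∫_ℝ (|η|² + |u|² + |v|²) dy = 1. Then 2·Re ∫_ℝ conj(η(y))·u(y) dy > −1. (Since the derivative of an eigenvalue branch E(ξ) at a point with normalized eigenfunction ψ = (η,u,v) equals ⟨ψ, (dĤ/dξ)ψ⟩ = 2 Re⟨η, u⟩, this shows the branch crossing the half-line 0 < E = −ξ does so with slope strictly greater than −1.) -/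
open MeasureTheory Filter

/-- Pointwise polarization identity for complex numbers. -/
lemma yanai_aux_norm_add_sq (a b : ℂ) :
    ‖a + b‖ ^ 2 = ‖a‖ ^ 2 + ‖b‖ ^ 2 + 2 * ((starRingEnd ℂ) a * b).re := by
  have h1 := Complex.normSq_add a b
  have h2 : (a * (starRingEnd ℂ) b).re = ((starRingEnd ℂ) a * b).re := by
    rw [show a * (starRingEnd ℂ) b = (starRingEnd ℂ) ((starRingEnd ℂ) a * b) by
      rw [map_mul]; simp]
    exact Complex.conj_re _
  simp only [← Complex.sq_norm, h2] at h1
  linarith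

/-- **The Yanai branch crosses `E = -ξ` with slope `> -1`.** For a continuous
profile `f` with `f(y) → ±∞` as `y → ±∞`, let `ξ < 0` and let `(η,u,v)` be a
differentiable, square-integrable, normalized solution of the fibered
shallow-water system at frequency `E = -ξ`. Then `2 Re ⟨η, u⟩ > -1`; since
the slope of the eigenvalue branch at a normalized eigenfunction equals
`2 Re ⟨η, u⟩`, the branch crossing `0 < E = -ξ` has slope strictly greater
than `-1`. -/
theorem yanai_slope_greater_than_minus_one
    (f : ℝ → ℝ) (hf : Continuous f)
    (hftop : Tendsto f atTop atTop) (hfbot : Tendsto f atBot atBot)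
    (ξ : ℝ) (hξ : ξ < 0)
    (η u v : ℝ → ℂ)
    (hηd : Differentiable ℝ η) (hud : Differentiable ℝ u) (hvd : Differentiable ℝ v)
    (hη2 : MemLp η 2 volume) (hu2 : MemLp u 2 volume) (hv2 : MemLp v 2 volume)
    (hsys : FiberedShallowWater f ξ (-ξ) η u v)
    (hnorm : ∫ y : ℝ, (‖η y‖ ^ 2 + ‖u y‖ ^ 2 + ‖v y‖ ^ 2) = 1) :
    2 * (∫ y : ℝ, (starRingEnd ℂ) (η y) * u y).re > -1 := by
  have hηc : Continuous η := hηd.continuous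
  have huc : Continuous u := hud.continuous
  have hvc : Continuous v := hvd.continuous
  have hηsq : Integrable (fun y => ‖η y‖ ^ 2) volume :=
    (memLp_two_iff_integrable_sq_norm hηc.aestronglyMeasurable).mp hη2
  have husq : Integrable (fun y => ‖u y‖ ^ 2) volume :=
    (memLp_two_iff_integrable_sq_norm huc.aestronglyMeasurable).mp hu2
  have hvsq : Integrable (fun y => ‖v y‖ ^ 2) volume :=
    (memLp_two_iff_integrable_sq_norm hvc.aestronglyMeasurable).mp hv2
  have hssq : Integrable (fun y => ‖η y + u y‖ ^ 2) volume :=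
    (memLp_two_iff_integrable_sq_norm (hηc.add huc).aestronglyMeasurable).mp (hη2.add hu2)
  have hηu : Integrable (fun y => ‖η y‖ ^ 2 + ‖u y‖ ^ 2) volume := hηsq.add husq
  have hmul : Integrable (fun y => (starRingEnd ℂ) (η y) * u y) volume := by
    refine hηu.mono' ?_ ?_
    · exact ((Complex.continuous_conj.comp hηc).mul huc).aestronglyMeasurable
    · filter_upwards with y
      have h1 : ‖(starRingEnd ℂ) (η y) * u y‖ = ‖η y‖ * ‖u y‖ := by
        rw [norm_mul, RCLike.norm_conj]
      rw [h1]
      nlinarith [sq_nonneg (‖η y‖ - ‖u y‖), norm_nonneg (η y), norm_nonneg (u y)]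
  have hre_int : Integrable (fun y => ((starRingEnd ℂ) (η y) * u y).re) volume := by
    have := Complex.reCLM.integrable_comp hmul
    simpa using this
  have hre : ∫ y, ((starRingEnd ℂ) (η y) * u y).re
      = (∫ y, (starRingEnd ℂ) (η y) * u y).re := by
    have := Complex.reCLM.integral_comp_comm hmul
    simpa using this
  -- expand the norm of the sum
  have hS : ∫ y, ‖η y + u y‖ ^ 2
      = (∫ y, ‖η y‖ ^ 2) + (∫ y, ‖u y‖ ^ 2)
        + 2 * (∫ y, (starRingEnd ℂ) (η y) * u y).re := by
    have e1 : ∫ y, ‖η y + u y‖ ^ 2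
        = ∫ y, (‖η y‖ ^ 2 + ‖u y‖ ^ 2 + 2 * ((starRingEnd ℂ) (η y) * u y).re) :=
      integral_congr_ae (Filter.Eventually.of_forall fun y => yanai_aux_norm_add_sq _ _)
    rw [e1, integral_add hηu (hre_int.const_mul 2), integral_add hηsq husq,
      integral_const_mul, hre]
  rw [integral_add hηu hvsq, integral_add hηsq husq] at hnorm
  have hSnn : 0 ≤ ∫ y, ‖η y + u y‖ ^ 2 := integral_nonneg fun y => by positivity
  have hVnn : 0 ≤ ∫ y, ‖v y‖ ^ 2 := integral_nonneg fun y => by positivity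
  by_contra hcon
  push_neg at hcon
  have hSz : ∫ y, ‖η y + u y‖ ^ 2 = 0 := by linarith
  have hVz : ∫ y, ‖v y‖ ^ 2 = 0 := by linarith
  -- deduce that v = 0 and u = -η everywhere
  have hv0 : ∀ y, v y = 0 := by
    have hae : (fun y => ‖v y‖ ^ 2) =ᵐ[volume] 0 :=
      (integral_eq_zero_iff_of_nonneg (fun y => by positivity) hvsq).mp hVz
    have heq : (fun y => ‖v y‖ ^ 2) = 0 :=
      (Continuous.ae_eq_iff_eq volume (by continuity) continuous_const).mp hae
    intro y
    have := congrFun heq y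
    simp only [Pi.zero_apply] at this
    exact norm_eq_zero.mp ((pow_eq_zero_iff (by norm_num)).mp this)
  have hs0 : ∀ y, η y + u y = 0 := by
    have hae : (fun y => ‖η y + u y‖ ^ 2) =ᵐ[volume] 0 :=
      (integral_eq_zero_iff_of_nonneg (fun y => by positivity) hssq).mp hSz
    have heq : (fun y => ‖η y + u y‖ ^ 2) = 0 :=
      (Continuous.ae_eq_iff_eq volume (by continuity) continuous_const).mp hae
    intro y
    have := congrFun heq y
    simp only [Pi.zero_apply] at this
    exact norm_eq_zero.mp ((pow_eq_zero_iff (by norm_num)).mp this)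
  have hu' : ∀ y, u y = -η y := fun y => by
    have := hs0 y; linear_combination this
  -- the ODE η' = f η
  have hode : ∀ y, deriv η y = (f y : ℂ) * η y := by
    intro y
    have h3 := (hsys y).2.2
    rw [hv0 y, hu' y, mul_zero] at h3
    have hI : Complex.I * ((f y : ℂ) * η y - deriv η y) = 0 := by linear_combination h3
    rcases mul_eq_zero.mp hI with h | h
    · exact absurd h Complex.I_ne_zero
    · exact (sub_eq_zero.mp h).symm
  -- solve the ODE explicitly
  set F : ℝ → ℝ := fun y => ∫ t in (0:ℝ)..y, f t with hFdef
  have hFd : ∀ y, HasDerivAt F (f y) y := fun y =>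
    (hf.integral_hasStrictDerivAt 0 y).hasDerivAt
  have hconst : ∀ y, η y * Complex.exp (-(F y : ℂ)) = η 0 := by
    have hg : ∀ y, HasDerivAt (fun y => η y * Complex.exp (-(F y : ℂ))) 0 y := by
      intro y
      have h1 : HasDerivAt (fun y => -((F y : ℝ) : ℂ)) (-(f y : ℂ)) y :=
        ((hFd y).ofReal_comp).neg
      have h2 : HasDerivAt (fun y => Complex.exp (-(F y : ℂ)))
          (Complex.exp (-(F y : ℂ)) * (-(f y : ℂ))) y := by
        simpa [mul_comm] using h1.cexp
      have h3 : HasDerivAt η (deriv η y) y := (hηd y).hasDerivAt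
      have h4 := h3.mul h2
      have h5 : deriv η y * Complex.exp (-(F y : ℂ))
          + η y * (Complex.exp (-(F y : ℂ)) * -(f y : ℂ)) = 0 := by
        rw [hode y]; ring
      rw [h5] at h4
      exact h4
    intro y
    have := is_const_of_deriv_eq_zero
      (fun x => (hg x).differentiableAt) (fun x => (hg x).deriv) y 0
    simpa [hFdef, intervalIntegral.integral_same] using this
  have hηF : ∀ y, η y = η 0 * Complex.exp ((F y : ℂ)) := by
    intro y
    have h1 : η y = (η y * Complex.exp (-(F y : ℂ))) * Complex.exp ((F y : ℂ)) := by
      rw [mul_assoc, ← Complex.exp_add]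
      simp
    rw [h1, hconst y]
  rcases eq_or_ne (η 0) 0 with h0 | h0
  · -- everything vanishes, contradicting the normalization
    have hη0 : ∀ y, η y = 0 := fun y => by rw [hηF y, h0, zero_mul]
    have hu0 : ∀ y, u y = 0 := fun y => by
      have := hs0 y; rw [hη0 y, zero_add] at this; exact this
    have z1 : ∫ y : ℝ, ‖η y‖ ^ 2 = 0 := by simp [hη0]
    have z2 : ∫ y : ℝ, ‖u y‖ ^ 2 = 0 := by simp [hu0]
    rw [z1, z2, hVz] at hnorm
    norm_num at hnorm
  · -- |η| is bounded below by a positive constant on a half-line, contradicting L²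
    obtain ⟨M, hM⟩ := (hftop.eventually_ge_atTop 0).exists_forall_of_atTop
    have hc : 0 < ‖η 0‖ ^ 2 * Real.exp (F M) ^ 2 := by
      have : 0 < ‖η 0‖ := norm_pos_iff.mpr h0
      positivity
    have hsub : Set.Ici M ⊆ {y | ‖η 0‖ ^ 2 * Real.exp (F M) ^ 2 ≤ ‖η y‖ ^ 2} := by
      intro y hy
      have hy' : M ≤ y := hy
      have hFy : F M ≤ F y := by
        have hadd : (∫ t in (0:ℝ)..M, f t) + ∫ t in M..y, f t = ∫ t in (0:ℝ)..y, f t :=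
          intervalIntegral.integral_add_adjacent_intervals
            (hf.intervalIntegrable 0 M) (hf.intervalIntegrable M y)
        have hnn : 0 ≤ ∫ t in M..y, f t :=
          intervalIntegral.integral_nonneg hy' (fun t ht => hM t ht.1)
        have : F y = F M + ∫ t in M..y, f t := by rw [hFdef]; simp [← hadd]
        linarith
      have hnorm_eq : ‖η y‖ = ‖η 0‖ * Real.exp (F y) := by
        rw [hηF y, norm_mul, Complex.norm_exp]
        simp
      have hexp : Real.exp (F M) ≤ Real.exp (F y) := Real.exp_le_exp.mpr hFy
      have h1 : 0 < Real.exp (F M) := Real.exp_pos _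
      have h2 : (0:ℝ) ≤ ‖η 0‖ := norm_nonneg _
      simp only [Set.mem_setOf_eq, hnorm_eq]
      rw [mul_pow]
      exact mul_le_mul_of_nonneg_left (pow_le_pow_left₀ h1.le hexp 2) (by positivity)
    have hfin : volume {y | ‖η 0‖ ^ 2 * Real.exp (F M) ^ 2 ≤ ‖η y‖ ^ 2} < ⊤ :=
      hηsq.measure_ge_lt_top hc
    have hIci : volume (Set.Ici M) < ⊤ := lt_of_le_of_lt (measure_mono hsub) hfin
    rw [Real.volume_Ici] at hIci
    exact absurd hIci (by simp)
end
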